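/- arXiv:2409.07434 — 3 statements merged into one kernel-verified Lean document; each statement's English description precedes it below -/
import Mathlib

section
/- Let q > 1 and let α > 0 be a constant learning rate with α‖𝕏‖ < 2. Then r_{α,q} < 1, where r_{α,q} = (sup_{v∈ℝ^d, ‖v‖₂=1} E‖(I_d − α D₁𝕏D₁)v‖₂^q)^{1/q}. -/
open MeasureTheory ProbabilityTheory Filter Topology Matrix

noncomputable section

/-- The Euclidean norm `‖v‖₂` of a vector `v ∈ ℝ^d`. -/
def euclNorm {d : ℕ} (v : Fin d → ℝ) : ℝ := Real.sqrt (∑ i, v i ^ 2)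

/-- The spectral (operator) norm of a matrix: `sup_{‖v‖₂ = 1} ‖A v‖₂`. -/
def specNorm {m d : ℕ} (A : Matrix (Fin m) (Fin d) ℝ) : ℝ :=
  sSup ((fun v => euclNorm (A.mulVec v)) '' {v | euclNorm v = 1})

/-- The Bernoulli distribution with parameter `p`, as a measure on `ℝ`
(point masses at `1` and `0`). -/
def bernoulliReal (p : ℝ) : Measure ℝ :=
  ENNReal.ofReal p • Measure.dirac 1 + ENNReal.ofReal (1 - p) • Measure.dirac 0

/-- `D` is a family of i.i.d. `p`-dropout matrices: each `D k` is a random diagonal matrix,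
and the diagonal entries, over all indices `k` and all diagonal positions, are i.i.d.
Bernoulli(p) random variables. -/
def IsDropoutFamily {Ω : Type} [MeasurableSpace Ω] (μ : Measure Ω) {d : ℕ} (p : ℝ)
    {ι : Type} (D : ι → Ω → Matrix (Fin d) (Fin d) ℝ) : Prop :=
  (∀ k i j, Measurable fun ω => D k ω i j) ∧
  (∀ k ω i j, i ≠ j → D k ω i j = 0) ∧
  iIndepFun (fun ki : ι × Fin d => fun ω => D ki.1 ω ki.2 ki.2) μ ∧
  (∀ k i, Measure.map (fun ω => D k ω i i) μ = bernoulliReal p)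

/-- The moment contraction factor `(sup_{‖v‖₂=1} E‖A(ω) v‖₂^q)^{1/q}` of a random matrix. -/
def contractionFactor {Ω : Type} [MeasurableSpace Ω] (μ : Measure Ω) {d : ℕ}
    (A : Ω → Matrix (Fin d) (Fin d) ℝ) (q : ℝ) : ℝ :=
  sSup ((fun v => ∫ ω, euclNorm ((A ω).mulVec v) ^ q ∂μ) '' {v | euclNorm v = 1}) ^ (1 / q)

/-- `γ` is the centered Gaussian distribution on `ι → ℝ` with covariance matrix `S`:
every linear functional pushes `γ` to the one-dimensional centered Gaussian with the
corresponding variance. -/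
def IsCenteredGaussian {ι : Type} [Fintype ι] (γ : Measure (ι → ℝ))
    (S : Matrix ι ι ℝ) : Prop :=
  IsProbabilityMeasure γ ∧
  ∀ l : ι → ℝ,
    Measure.map (fun v => l ⬝ᵥ v) γ = gaussianReal 0 (Real.toNNReal (l ⬝ᵥ S.mulVec l))

/-- Convergence in distribution (weak convergence) of a family of random elements to the
distribution `γ`, along a filter `l`. -/
def TendstoInDistribution {Ω : Type} [MeasurableSpace Ω] (μ : Measure Ω)
    {E : Type} [MeasurableSpace E] [TopologicalSpace E] {κ : Type*}
    (Z : κ → Ω → E) (l : Filter κ) (γ : Measure E) : Prop :=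
  ∀ f : BoundedContinuousFunction E ℝ,
    Tendsto (fun n => ∫ ω, f (Z n ω) ∂μ) l (𝓝 (∫ x, f x ∂γ))

/-- The Gram matrix `𝕏 = Xᵀ X`. -/
def gram {n d : ℕ} (X : Matrix (Fin n) (Fin d) ℝ) : Matrix (Fin d) (Fin d) ℝ := Xᵀ * X

/-- `𝕏_p = p 𝕏 + (1-p) Diag(𝕏)`. -/
def gramP {n d : ℕ} (p : ℝ) (X : Matrix (Fin n) (Fin d) ℝ) : Matrix (Fin d) (Fin d) ℝ :=
  p • gram X + (1 - p) • Matrix.diagonal fun i => gram X i i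

/-- `𝕏̄ = 𝕏 - Diag(𝕏)`. -/
def gramBar {n d : ℕ} (X : Matrix (Fin n) (Fin d) ℝ) : Matrix (Fin d) (Fin d) ℝ :=
  gram X - Matrix.diagonal fun i => gram X i i

/-- The response vector `y = X β* + ε`. -/
def yVec {Ω : Type} {n d : ℕ} (X : Matrix (Fin n) (Fin d) ℝ) (βstar : Fin d → ℝ)
    (ε : Ω → Fin n → ℝ) (ω : Ω) : Fin n → ℝ := X.mulVec βstar + ε ω

/-- The ℓ²-regularized estimator `β̃ = 𝕏_p⁻¹ Xᵀ y`. -/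
def betaTilde {Ω : Type} {n d : ℕ} (p : ℝ) (X : Matrix (Fin n) (Fin d) ℝ)
    (βstar : Fin d → ℝ) (ε : Ω → Fin n → ℝ) (ω : Ω) : Fin d → ℝ :=
  (gramP p X)⁻¹.mulVec (Xᵀ.mulVec (yVec X βstar ε ω))

/-- One-sided gradient descent dropout recursion:
`β̃_k = β̃_{k-1} + α D_k Xᵀ (y - X D_k β̃_{k-1})`. -/
def IsGDSeq {Ω : Type} [MeasurableSpace Ω] {n d : ℕ} (X : Matrix (Fin n) (Fin d) ℝ)
    (y : Ω → Fin n → ℝ) (D : ℕ → Ω → Matrix (Fin d) (Fin d) ℝ) (α : ℝ)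
    (β : ℕ → Ω → Fin d → ℝ) : Prop :=
  (∀ k, Measurable (β k)) ∧
  ∀ (k : ℕ) (ω : Ω), β (k + 1) ω
    = β k ω
      + α • (D (k + 1) ω).mulVec (Xᵀ.mulVec (y ω - X.mulVec ((D (k + 1) ω).mulVec (β k ω))))

/-- Two-sided gradient descent dropout recursion (indexed by `ℤ`). -/
def IsGDSeqZ {Ω : Type} [MeasurableSpace Ω] {n d : ℕ} (X : Matrix (Fin n) (Fin d) ℝ)
    (y : Ω → Fin n → ℝ) (D : ℤ → Ω → Matrix (Fin d) (Fin d) ℝ) (α : ℝ)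
    (β : ℤ → Ω → Fin d → ℝ) : Prop :=
  (∀ k, Measurable (β k)) ∧
  ∀ (k : ℤ) (ω : Ω), β k ω
    = β (k - 1) ω
      + α • (D k ω).mulVec (Xᵀ.mulVec (y ω - X.mulVec ((D k ω).mulVec (β (k - 1) ω))))

/-- Difference-form GD dropout recursion around the centering vector `bt`:
`β_k − bt = (I - α D_k 𝕏 D_k)(β_{k-1} − bt) + α D_k 𝕏̄ (p I - D_k) bt`. -/
def IsGDDiffSeq {Ω : Type} {n d : ℕ} (p : ℝ) (X : Matrix (Fin n) (Fin d) ℝ)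
    (bt : Ω → Fin d → ℝ) (D : ℕ → Ω → Matrix (Fin d) (Fin d) ℝ) (α : ℝ)
    (β : ℕ → Ω → Fin d → ℝ) : Prop :=
  ∀ (k : ℕ) (ω : Ω),
    β (k + 1) ω - bt ω
      = ((1 : Matrix (Fin d) (Fin d) ℝ)
            - α • (D (k + 1) ω * gram X * D (k + 1) ω)).mulVec (β k ω - bt ω)
        + α • (D (k + 1) ω * gramBar X
            * (p • (1 : Matrix (Fin d) (Fin d) ℝ) - D (k + 1) ω)).mulVec (bt ω)

/-- The affine recursion obtained by replacing `I - α D_k 𝕏 D_k` by its expectation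
`I - α p 𝕏_p`:
`β_k − bt = (I - α p 𝕏_p)(β_{k-1} − bt) + α D_k 𝕏̄ (p I - D_k) bt`. -/
def IsAffineSeq {Ω : Type} {n d : ℕ} (p : ℝ) (X : Matrix (Fin n) (Fin d) ℝ)
    (bt : Ω → Fin d → ℝ) (D : ℕ → Ω → Matrix (Fin d) (Fin d) ℝ) (α : ℝ)
    (β : ℕ → Ω → Fin d → ℝ) : Prop :=
  ∀ (k : ℕ) (ω : Ω),
    β (k + 1) ω - bt ω
      = ((1 : Matrix (Fin d) (Fin d) ℝ) - (α * p) • gramP p X).mulVec (β k ω - bt ω)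
        + α • (D (k + 1) ω * gramBar X
            * (p • (1 : Matrix (Fin d) (Fin d) ℝ) - D (k + 1) ω)).mulVec (bt ω)



section AuxLemmas

lemma euclNorm_nonneg {d : ℕ} (v : Fin d → ℝ) : 0 ≤ euclNorm v := Real.sqrt_nonneg _

lemma euclNorm_sq {d : ℕ} (v : Fin d → ℝ) : euclNorm v ^ 2 = ∑ i, v i ^ 2 :=
  Real.sq_sqrt (by positivity)

lemma dot_le_euclNorm {d : ℕ} (v w : Fin d → ℝ) :
    ∑ i, v i * w i ≤ euclNorm v * euclNorm w := Real.sum_mul_le_sqrt_mul_sqrt _ _ _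

lemma euclNorm_smul {d : ℕ} (c : ℝ) (v : Fin d → ℝ) :
    euclNorm (c • v) = |c| * euclNorm v := by
  unfold euclNorm
  rw [show ∑ i, (c • v) i ^ 2 = c ^ 2 * ∑ i, v i ^ 2 by
    simp [Finset.mul_sum, mul_pow], Real.sqrt_mul (sq_nonneg c), Real.sqrt_sq_eq_abs]

lemma euclNorm_single {d : ℕ} (j : Fin d) :
    euclNorm (fun i => if i = j then (1 : ℝ) else 0) = 1 := by
  unfold euclNorm
  rw [show ∑ i, (if i = j then (1:ℝ) else 0) ^ 2 = 1 by simp [apply_ite (· ^ 2)],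
    Real.sqrt_one]

lemma euclNorm_mulVec_le {m d : ℕ} (A : Matrix (Fin m) (Fin d) ℝ) (v : Fin d → ℝ) :
    euclNorm (A.mulVec v) ≤ Real.sqrt (∑ i, ∑ j, A i j ^ 2) * euclNorm v := by
  unfold euclNorm
  rw [← Real.sqrt_mul (by positivity)]
  apply Real.sqrt_le_sqrt
  rw [Finset.sum_mul]
  refine Finset.sum_le_sum fun i _ => ?_
  simpa [Matrix.mulVec, dotProduct] using
    Finset.sum_mul_sq_le_sq_mul_sq Finset.univ (A i) v

lemma bddAbove_specSet {m d : ℕ} (A : Matrix (Fin m) (Fin d) ℝ) :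
    BddAbove ((fun v => euclNorm (A.mulVec v)) '' {v | euclNorm v = 1}) := by
  refine ⟨Real.sqrt (∑ i, ∑ j, A i j ^ 2), ?_⟩
  rintro x ⟨v, hv, rfl⟩
  simpa [Set.mem_setOf_eq.mp hv] using euclNorm_mulVec_le A v

lemma euclNorm_mulVec_le_specNorm {m d : ℕ} (A : Matrix (Fin m) (Fin d) ℝ)
    (v : Fin d → ℝ) : euclNorm (A.mulVec v) ≤ specNorm A * euclNorm v := by
  rcases eq_or_ne v 0 with rfl | hv
  · simp [euclNorm, Matrix.mulVec_zero]
  · have h1 : 0 < ∑ i, v i ^ 2 := by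
      obtain ⟨i, hi⟩ := Function.ne_iff.mp hv
      exact Finset.sum_pos' (fun j _ => sq_nonneg _)
        ⟨i, Finset.mem_univ i, by simpa using sq_pos_of_ne_zero hi⟩
    have hen : 0 < euclNorm v := Real.sqrt_pos.mpr h1
    set c := (euclNorm v)⁻¹ with hc
    have hu : euclNorm (c • v) = 1 := by
      rw [euclNorm_smul, abs_of_nonneg (by positivity), inv_mul_cancel₀ hen.ne']
    have hmem : euclNorm (A.mulVec (c • v)) ∈
        ((fun v => euclNorm (A.mulVec v)) '' {v | euclNorm v = 1}) := ⟨_, hu, rfl⟩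
    have hle := le_csSup (bddAbove_specSet A) hmem
    rw [Matrix.mulVec_smul, euclNorm_smul, abs_of_nonneg (by positivity)] at hle
    calc euclNorm (A.mulVec v) = euclNorm v * (c * euclNorm (A.mulVec v)) := by
          rw [hc, ← mul_assoc, mul_inv_cancel₀ hen.ne', one_mul]
      _ ≤ euclNorm v * specNorm A := mul_le_mul_of_nonneg_left hle hen.le
      _ = specNorm A * euclNorm v := mul_comm _ _

lemma specNorm_nonneg {m d : ℕ} (A : Matrix (Fin m) (Fin d) ℝ) (hd : 0 < d) :
    0 ≤ specNorm A := by
  have j : Fin d := ⟨0, hd⟩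
  exact le_trans (euclNorm_nonneg _)
    (le_csSup (bddAbove_specSet A) ⟨_, euclNorm_single j, rfl⟩)

lemma dot_transpose_mulVec {n d : ℕ} (X : Matrix (Fin n) (Fin d) ℝ) (a : Fin d → ℝ)
    (u : Fin n → ℝ) : ∑ i, a i * (Xᵀ.mulVec u) i = ∑ k, (X.mulVec a) k * u k := by
  simp only [Matrix.mulVec, dotProduct, Matrix.transpose_apply, Finset.mul_sum,
    Finset.sum_mul]
  rw [Finset.sum_comm]
  exact Finset.sum_congr rfl fun k _ => Finset.sum_congr rfl fun i _ => by ring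

lemma dot_gram {n d : ℕ} (X : Matrix (Fin n) (Fin d) ℝ) (w : Fin d → ℝ) :
    ∑ i, w i * ((gram X).mulVec w) i = ∑ k, (X.mulVec w) k ^ 2 := by
  unfold _root_.gram
  rw [← Matrix.mulVec_mulVec, dot_transpose_mulVec]
  exact Finset.sum_congr rfl fun k _ => (sq _).symm

lemma gram_mulVec_sq_le {n d : ℕ} (X : Matrix (Fin n) (Fin d) ℝ) (hd : 0 < d)
    (w : Fin d → ℝ) :
    ∑ i, ((gram X).mulVec w) i ^ 2
      ≤ specNorm (gram X) * ∑ i, w i * ((gram X).mulVec w) i := by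
  set S := specNorm (gram X) with hSdef
  have hS : 0 ≤ S := specNorm_nonneg _ hd
  set u := X.mulVec w with hu
  set w' := (gram X).mulVec w with hw'
  have hw'2 : w' = Xᵀ.mulVec u := by rw [hw', hu, Matrix.mulVec_mulVec]; rfl
  set a := euclNorm w' with ha
  set b := euclNorm u with hb
  have ha2 : a ^ 2 = ∑ i, w' i ^ 2 := euclNorm_sq _
  have hb2 : b ^ 2 = ∑ i, w i * w' i := by
    rw [hb, euclNorm_sq, hw', dot_gram]
  have step1 : a ^ 2 ≤ euclNorm (X.mulVec w') * b := by
    rw [ha2]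
    calc ∑ i, w' i ^ 2 = ∑ i, w' i * (Xᵀ.mulVec u) i := by
          rw [← hw'2]; exact Finset.sum_congr rfl fun i _ => pow_two _
      _ = ∑ k, (X.mulVec w') k * u k := dot_transpose_mulVec X w' u
      _ ≤ euclNorm (X.mulVec w') * euclNorm u := dot_le_euclNorm _ _
  have step2 : euclNorm (X.mulVec w') ≤ Real.sqrt S * a := by
    have h1 : euclNorm (X.mulVec w') ^ 2 = ∑ i, w' i * ((gram X).mulVec w') i := by
      rw [euclNorm_sq, dot_gram]
    have h2 : ∑ i, w' i * ((gram X).mulVec w') i ≤ a * (S * a) := by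
      calc ∑ i, w' i * ((gram X).mulVec w') i
          ≤ euclNorm w' * euclNorm ((gram X).mulVec w') := dot_le_euclNorm _ _
        _ ≤ euclNorm w' * (S * euclNorm w') :=
            mul_le_mul_of_nonneg_left (euclNorm_mulVec_le_specNorm _ _) (euclNorm_nonneg _)
        _ = a * (S * a) := rfl
    have h3 : euclNorm (X.mulVec w') ^ 2 ≤ S * a ^ 2 := by
      rw [h1]; nlinarith [h2]
    have h4 : (Real.sqrt S * a) ^ 2 = S * a ^ 2 := by
      rw [mul_pow, Real.sq_sqrt hS]
    have hnn : 0 ≤ Real.sqrt S * a := mul_nonneg (Real.sqrt_nonneg S) (euclNorm_nonneg w')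
    have := h4 ▸ h3
    exact (pow_le_pow_iff_left₀ (euclNorm_nonneg _) hnn two_ne_zero).mp this
  have hba : a ^ 2 ≤ Real.sqrt S * a * b := by
    calc a ^ 2 ≤ euclNorm (X.mulVec w') * b := step1
      _ ≤ Real.sqrt S * a * b := mul_le_mul_of_nonneg_right step2 (euclNorm_nonneg u)
  have key : a ^ 2 ≤ S * b ^ 2 := by
    rcases eq_or_lt_of_le (euclNorm_nonneg w') with h0 | h0
    · have haz : a = 0 := ha.trans h0.symm
      rw [haz]
      nlinarith [sq_nonneg b, hS]
    · have h5 : a ≤ Real.sqrt S * b := by nlinarith [hba, h0]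
      nlinarith [Real.sq_sqrt hS, Real.sqrt_nonneg S, euclNorm_nonneg u, h0]
  calc ∑ i, ((gram X).mulVec w) i ^ 2 = a ^ 2 := by rw [ha2, hw']
    _ ≤ S * b ^ 2 := key
    _ = S * ∑ i, w i * ((gram X).mulVec w) i := by rw [hb2]

lemma mulVec_expand {n d : ℕ} (X : Matrix (Fin n) (Fin d) ℝ) (α : ℝ) (b v : Fin d → ℝ) :
    ((1 : Matrix (Fin d) (Fin d) ℝ)
      - α • (Matrix.diagonal b * gram X * Matrix.diagonal b)).mulVec v
    = fun i => v i - α * (b i * ((gram X).mulVec (fun k => b k * v k)) i) := by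
  funext i
  rw [Matrix.sub_mulVec, Matrix.one_mulVec, Matrix.smul_mulVec]
  have h1 : (Matrix.diagonal b * gram X * Matrix.diagonal b).mulVec v
      = (Matrix.diagonal b).mulVec ((gram X).mulVec ((Matrix.diagonal b).mulVec v)) := by
    rw [Matrix.mulVec_mulVec, Matrix.mulVec_mulVec]
  have h2 : (Matrix.diagonal b).mulVec v = fun k => b k * v k := by
    funext k; exact Matrix.mulVec_diagonal _ _ _
  simp only [Pi.sub_apply, Pi.smul_apply, smul_eq_mul, h1, h2]
  rw [Matrix.mulVec_diagonal]

lemma contraction_of_01 {n d : ℕ} (X : Matrix (Fin n) (Fin d) ℝ) (hd : 0 < d) {α : ℝ}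
    (hα : 0 < α) (hα2 : α * specNorm (gram X) ≤ 2) (b : Fin d → ℝ)
    (hb : ∀ i, b i = 0 ∨ b i = 1) (v : Fin d → ℝ) :
    euclNorm (((1 : Matrix (Fin d) (Fin d) ℝ)
      - α • (Matrix.diagonal b * gram X * Matrix.diagonal b)).mulVec v) ≤ euclNorm v := by
  rw [mulVec_expand]
  set w : Fin d → ℝ := fun k => b k * v k with hw
  set g : Fin d → ℝ := (gram X).mulVec w with hg
  set S := specNorm (gram X) with hS
  have hb1 : ∀ i, b i ^ 2 ≤ 1 := fun i => by rcases hb i with h | h <;> rw [h] <;> norm_num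
  set t := ∑ i, w i * g i with ht
  have htnn : 0 ≤ t := by
    rw [ht, hg, dot_gram]
    positivity
  have hvt : ∑ i, v i * (b i * g i) = t := by
    rw [ht]
    exact Finset.sum_congr rfl fun i _ => by rw [hw]; ring
  have hsq : ∑ i, (b i * g i) ^ 2 ≤ S * t := by
    calc ∑ i, (b i * g i) ^ 2 ≤ ∑ i, g i ^ 2 := by
          refine Finset.sum_le_sum fun i _ => ?_
          rw [mul_pow]
          nlinarith [hb1 i, sq_nonneg (g i)]
      _ ≤ S * t := by rw [ht, hg]; exact gram_mulVec_sq_le X hd w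
  apply Real.sqrt_le_sqrt
  have expand : ∑ i, (v i - α * (b i * g i)) ^ 2
      = ∑ i, v i ^ 2 - 2 * α * t + α ^ 2 * ∑ i, (b i * g i) ^ 2 := by
    rw [← hvt, Finset.mul_sum, ← Finset.sum_sub_distrib, Finset.mul_sum,
      ← Finset.sum_add_distrib]
    exact Finset.sum_congr rfl fun i _ => by ring
  rw [expand]
  have h1 : α ^ 2 * ∑ i, (b i * g i) ^ 2 ≤ α ^ 2 * (S * t) :=
    mul_le_mul_of_nonneg_left hsq (sq_nonneg α)
  have h2 : α * t * (α * S) ≤ α * t * 2 :=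
    mul_le_mul_of_nonneg_left hα2 (mul_nonneg hα.le htnn)
  nlinarith [h1, h2]

lemma singleton_sq {n d : ℕ} (X : Matrix (Fin n) (Fin d) ℝ) (α : ℝ) (j : Fin d)
    (v : Fin d → ℝ) :
    ∑ i, (((1 : Matrix (Fin d) (Fin d) ℝ)
      - α • (Matrix.diagonal (fun i => if i = j then (1:ℝ) else 0) * gram X *
          Matrix.diagonal (fun i => if i = j then (1:ℝ) else 0))).mulVec v) i ^ 2
    = ∑ i, v i ^ 2 - (1 - (1 - α * gram X j j) ^ 2) * v j ^ 2 := by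
  rw [mulVec_expand]
  set b : Fin d → ℝ := fun i => if i = j then (1:ℝ) else 0 with hb
  have hwv : (fun k => b k * v k) = fun k => if k = j then v j else 0 := by
    funext k; rw [hb]; by_cases h : k = j <;> simp [h]
  have hg : ∀ i, ((gram X).mulVec (fun k => b k * v k)) i = gram X i j * v j := by
    intro i
    rw [hwv]
    simp [Matrix.mulVec, dotProduct, Finset.sum_ite_eq', mul_comm]
  have key : ∀ i, (v i - α * (b i * ((gram X).mulVec fun k => b k * v k) i)) ^ 2
      = v i ^ 2 + (if i = j then ((1 - α * gram X j j) ^ 2 - 1) * v j ^ 2 else 0) := by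
    intro i
    rw [hg i, hb]
    by_cases h : i = j
    · subst h; simp; ring
    · simp [h]
  have key' : ∀ i, (v i - α * ((if i = j then (1:ℝ) else 0) *
      ((gram X).mulVec fun k => (if k = j then (1:ℝ) else 0) * v k) i)) ^ 2
      = v i ^ 2 + (if i = j then ((1 - α * gram X j j) ^ 2 - 1) * v j ^ 2 else 0) := key
  simp only [key']
  rw [Finset.sum_add_distrib, Finset.sum_ite_eq' Finset.univ j]
  simp only [Finset.mem_univ, if_pos]
  ring

lemma bernoulliReal_one (p : ℝ) : bernoulliReal p {1} = ENNReal.ofReal p := by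
  simp [bernoulliReal, Measure.dirac_apply' _ (measurableSet_singleton _)]

lemma bernoulliReal_zero (p : ℝ) : bernoulliReal p {0} = ENNReal.ofReal (1 - p) := by
  simp [bernoulliReal, Measure.dirac_apply' _ (measurableSet_singleton _)]

lemma bernoulliReal_compl (p : ℝ) : bernoulliReal p ({0, 1} : Set ℝ)ᶜ = 0 := by
  have hm : MeasurableSet (({0, 1} : Set ℝ)ᶜ) := (Set.Finite.measurableSet (by simp)).compl
  simp [bernoulliReal, Measure.dirac_apply' _ hm, Set.indicator_apply]

lemma meas_f {Ω : Type} [MeasurableSpace Ω] {n d : ℕ} (X : Matrix (Fin n) (Fin d) ℝ)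
    (D1 : Ω → Matrix (Fin d) (Fin d) ℝ) (hmeas : ∀ i j, Measurable fun ω => D1 ω i j)
    (v : Fin d → ℝ) (α q : ℝ) :
    Measurable fun ω =>
      euclNorm (((1 : Matrix (Fin d) (Fin d) ℝ)
        - α • (D1 ω * gram X * D1 ω)).mulVec v) ^ q := by
  have hM : ∀ i k, Measurable fun ω =>
      ((1 : Matrix (Fin d) (Fin d) ℝ) - α • (D1 ω * gram X * D1 ω)) i k := by
    intro i k
    simp only [Matrix.sub_apply, Matrix.smul_apply, Matrix.one_apply, Matrix.mul_apply,
      smul_eq_mul]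
    refine Measurable.sub measurable_const (measurable_const.mul ?_)
    refine Finset.measurable_sum _ fun j' _ => ?_
    exact (Finset.measurable_sum _ fun k' _ =>
      ((hmeas i k').mul measurable_const)).mul (hmeas j' k)
  have he : ∀ i, Measurable fun ω =>
      (((1 : Matrix (Fin d) (Fin d) ℝ) - α • (D1 ω * gram X * D1 ω)).mulVec v) i := by
    intro i
    simp only [Matrix.mulVec, dotProduct]
    exact Finset.measurable_sum _ fun k _ => (hM i k).mul measurable_const
  refine Measurable.pow_const ?_ q
  unfold euclNorm
  exact (Finset.measurable_sum _ fun i _ => (he i).pow_const 2).sqrt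

lemma exists_large_coord {d : ℕ} (hd : 0 < d) (v : Fin d → ℝ) (hv : ∑ i, v i ^ 2 = 1) :
    ∃ j, 1 / (d : ℝ) ≤ v j ^ 2 := by
  by_contra h
  push_neg at h
  have hne : (Finset.univ : Finset (Fin d)).Nonempty := ⟨⟨0, hd⟩, Finset.mem_univ _⟩
  have : (1 : ℝ) < 1 := by
    calc (1 : ℝ) = ∑ i, v i ^ 2 := hv.symm
      _ < ∑ _i : Fin d, 1 / (d : ℝ) := Finset.sum_lt_sum_of_nonempty hne fun i _ => h i
      _ = 1 := by
          rw [Finset.sum_const, Finset.card_univ, Fintype.card_fin, nsmul_eq_mul]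
          field_simp
  exact lt_irrefl _ this

end AuxLemmas

/-- Lemma: learning-rate range in GD dropout.
If `q > 1` and `α‖𝕏‖ < 2`, then `r_{α,q} < 1`, where
`r_{α,q} = (sup_{‖v‖₂=1} E‖(I_d − α D₁ 𝕏 D₁) v‖₂^q)^{1/q}`. -/
theorem statement_0
    {Ω : Type} [MeasurableSpace Ω] (μ : Measure Ω) [IsProbabilityMeasure μ]
    {d n : ℕ} (X : Matrix (Fin n) (Fin d) ℝ)
    (hX : ∀ j : Fin d, ∃ i : Fin n, X i j ≠ 0)
    (p : ℝ) (hp : p ∈ Set.Ioo (0 : ℝ) 1)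
    (D1 : Ω → Matrix (Fin d) (Fin d) ℝ)
    (hD : IsDropoutFamily μ p fun _ : Unit => D1)
    (q α : ℝ) (hq : 1 < q) (hα : 0 < α)
    (hα2 : α * specNorm (gram X) < 2) :
    contractionFactor μ
      (fun ω => (1 : Matrix (Fin d) (Fin d) ℝ) - α • (D1 ω * gram X * D1 ω)) q < 1 := by

  obtain ⟨hDmeas, hDoff, hDindep, hDlaw⟩ := hD
  obtain ⟨hp0, hp1⟩ := hp
  have hq0 : (0 : ℝ) < q := by linarith
  rcases Nat.eq_zero_or_pos d with hd0 | hd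
  · subst hd0
    have hempty : {v : Fin 0 → ℝ | euclNorm v = 1} = ∅ := by
      ext v
      simp [euclNorm]
    unfold contractionFactor
    rw [hempty, Set.image_empty, Real.sSup_empty,
      Real.zero_rpow (one_div_ne_zero hq0.ne')]
    norm_num
  -- main case : d > 0
  set S := specNorm (gram X) with hSdef
  have hS0 : 0 ≤ S := specNorm_nonneg _ hd
  have hgram_diag : ∀ j, gram X j j = ∑ k, X k j ^ 2 := by
    intro j; simp [_root_.gram, Matrix.mul_apply, Matrix.transpose_apply, sq]
  have hXjj_pos : ∀ j, 0 < gram X j j := by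
    intro j
    rw [hgram_diag]
    obtain ⟨i, hi⟩ := hX j
    exact Finset.sum_pos' (fun k _ => sq_nonneg _)
      ⟨i, Finset.mem_univ i, by simpa using sq_pos_of_ne_zero hi⟩
  have hXjj_le : ∀ j, gram X j j ≤ S := by
    intro j
    have h1 : gram X j j = ∑ i, (fun i => if i = j then (1:ℝ) else 0) i *
        ((gram X).mulVec (fun i => if i = j then (1:ℝ) else 0)) i := by
      have hmv : ∀ i, ((gram X).mulVec (fun i => if i = j then (1:ℝ) else 0)) i
          = gram X i j := by
        intro i
        simp [Matrix.mulVec, dotProduct, mul_ite, Finset.sum_ite_eq']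
      have hterm : ∀ i, (fun i => if i = j then (1:ℝ) else 0) i *
          ((gram X).mulVec (fun i => if i = j then (1:ℝ) else 0)) i
          = if i = j then gram X j j else 0 := by
        intro i
        rw [hmv i]
        by_cases h : i = j <;> simp [h]
      rw [Finset.sum_congr rfl fun i _ => hterm i, Finset.sum_ite_eq' Finset.univ j]
      simp
    calc gram X j j
        = ∑ i, (fun i => if i = j then (1:ℝ) else 0) i *
            ((gram X).mulVec (fun i => if i = j then (1:ℝ) else 0)) i := h1
      _ ≤ euclNorm (fun i => if i = j then (1:ℝ) else 0) *
            euclNorm ((gram X).mulVec (fun i => if i = j then (1:ℝ) else 0)) :=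
          dot_le_euclNorm _ _
      _ ≤ euclNorm (fun i => if i = j then (1:ℝ) else 0) *
            (S * euclNorm (fun i => if i = j then (1:ℝ) else 0)) :=
          mul_le_mul_of_nonneg_left (euclNorm_mulVec_le_specNorm _ _) (euclNorm_nonneg _)
      _ = S := by rw [euclNorm_single]; ring
  have hαjj : ∀ j, α * gram X j j < 2 := fun j =>
    lt_of_le_of_lt (mul_le_mul_of_nonneg_left (hXjj_le j) hα.le) hα2
  set δ : Fin d → ℝ := fun j => 1 - (1 - α * gram X j j) ^ 2 with hδdef
  have hδpos : ∀ j, 0 < δ j := by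
    intro j
    have h1 : 0 < α * gram X j j := mul_pos hα (hXjj_pos j)
    have h2 := hαjj j
    simp only [hδdef]
    nlinarith
  have hδle : ∀ j, δ j ≤ 1 := fun j => by
    simp only [hδdef]; nlinarith [sq_nonneg (1 - α * gram X j j)]
  have hne : (Finset.univ : Finset (Fin d)).Nonempty := ⟨⟨0, hd⟩, Finset.mem_univ _⟩
  set δm := Finset.univ.inf' hne δ with hδm
  have hδm_pos : 0 < δm := by
    rw [hδm, Finset.lt_inf'_iff]; exact fun j _ => hδpos j
  have hδm_le : ∀ j, δm ≤ δ j := fun j => Finset.inf'_le _ (Finset.mem_univ j)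
  have hδm_le1 : δm ≤ 1 := le_trans (hδm_le ⟨0, hd⟩) (hδle _)
  have hdR : (0:ℝ) < d := by exact_mod_cast hd
  have hd1 : (1:ℝ) ≤ d := by exact_mod_cast hd
  have hx0 : 0 ≤ 1 - δm / d := by
    have h1 : δm / d ≤ 1 := (div_le_one hdR).mpr (le_trans hδm_le1 hd1)
    linarith
  set ρ := Real.sqrt (1 - δm / d) with hρ
  have hρ0 : 0 ≤ ρ := Real.sqrt_nonneg _
  have hρ1 : ρ < 1 := by
    have hlt : 1 - δm / d < 1 := by
      have : 0 < δm / d := div_pos hδm_pos hdR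
      linarith
    have := Real.sqrt_lt_sqrt hx0 hlt
    rwa [Real.sqrt_one] at this
  set c₀ := ρ ^ q with hc₀
  have hc₀_lt : c₀ < 1 := Real.rpow_lt_one hρ0 hρ1 hq0
  have hc₀_0 : 0 ≤ c₀ := Real.rpow_nonneg hρ0 q
  set wP := p * (1 - p) ^ (d - 1) with hwP
  have hwP_pos : 0 < wP := mul_pos hp0 (pow_pos (by linarith) _)
  have hwP_le1 : wP ≤ 1 := by
    rw [hwP]
    calc p * (1 - p) ^ (d - 1) ≤ p * 1 :=
          mul_le_mul_of_nonneg_left (pow_le_one₀ (by linarith) (by linarith)) hp0.le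
      _ ≤ 1 := by linarith
  set B := 1 - (1 - c₀) * wP with hB
  have hB_lt1 : B < 1 := by rw [hB]; nlinarith
  -- measure of the event that the dropout diagonal equals e_j
  have hAfact : ∀ j : Fin d,
      μ (⋂ i, (fun ω => D1 ω i i) ⁻¹' {if i = j then (1:ℝ) else 0})
        = ENNReal.ofReal p * ENNReal.ofReal (1 - p) ^ (d - 1) := by
    intro j
    have hindep := hDindep.measure_inter_preimage_eq_mul
      (S := (Finset.univ : Finset (Unit × Fin d)))
      (sets := fun ki => {if ki.2 = j then (1:ℝ) else 0})
      (fun ki _ => measurableSet_singleton _)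
    have hset : (⋂ ki ∈ (Finset.univ : Finset (Unit × Fin d)),
        (fun ω => D1 ω ki.2 ki.2) ⁻¹' {if ki.2 = j then (1:ℝ) else 0})
        = ⋂ i, (fun ω => D1 ω i i) ⁻¹' {if i = j then (1:ℝ) else 0} := by
      ext ω
      simp only [Set.mem_iInter, Finset.mem_univ, Set.mem_preimage,
        Set.mem_singleton_iff, forall_const]
      exact ⟨fun h i => h ((), i), fun h ki => h ki.2⟩
    have hfac : ∀ (i : Fin d) (c : ℝ),
        μ ((fun ω => D1 ω i i) ⁻¹' {c}) = bernoulliReal p {c} := by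
      intro i c
      rw [← hDlaw () i, Measure.map_apply (hDmeas () i i) (measurableSet_singleton _)]
    rw [hset] at hindep
    rw [hindep]
    have hval : ∀ ki : Unit × Fin d,
        μ ((fun ω => D1 ω ki.2 ki.2) ⁻¹' {if ki.2 = j then (1:ℝ) else 0})
        = if ki.2 = j then ENNReal.ofReal p else ENNReal.ofReal (1 - p) := by
      intro ki
      rw [hfac ki.2]
      by_cases h : ki.2 = j <;> simp [h, bernoulliReal_one, bernoulliReal_zero]
    rw [Finset.prod_congr rfl fun ki _ => hval ki]
    rw [Fintype.prod_prod_type]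
    rw [Finset.univ_unique, Finset.prod_singleton]
    rw [← Finset.mul_prod_erase Finset.univ _ (Finset.mem_univ j), if_pos rfl]
    congr 1
    rw [Finset.prod_congr rfl fun i hi => if_neg (Finset.ne_of_mem_erase hi),
      Finset.prod_const, Finset.card_erase_of_mem (Finset.mem_univ j),
      Finset.card_univ, Fintype.card_fin]
  -- a.s. the diagonal entries are 0 or 1
  have hnull : ∀ᵐ ω ∂μ, ∀ i, D1 ω i i = 0 ∨ D1 ω i i = 1 := by
    rw [ae_all_iff]
    intro i
    rw [ae_iff]
    have hmc : MeasurableSet (({0, 1} : Set ℝ)ᶜ) :=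
      (Set.Finite.measurableSet (by simp)).compl
    have h0 : μ ((fun ω => D1 ω i i) ⁻¹' ({0, 1} : Set ℝ)ᶜ) = 0 := by
      rw [← Measure.map_apply (hDmeas () i i) hmc, hDlaw () i, bernoulliReal_compl]
    refine measure_mono_null (fun ω hω => ?_) h0
    simp only [Set.mem_setOf_eq, not_or] at hω
    simp only [Set.mem_preimage, Set.mem_compl_iff, Set.mem_insert_iff,
      Set.mem_singleton_iff, not_or]
    exact hω
  -- the key per-vector bound
  have key : ∀ v : Fin d → ℝ, euclNorm v = 1 →
      (∫ ω, euclNorm (((1 : Matrix (Fin d) (Fin d) ℝ)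
          - α • (D1 ω * gram X * D1 ω)).mulVec v) ^ q ∂μ) ≤ B := by
    intro v hv
    have hv2 : ∑ i, v i ^ 2 = 1 := by
      have h := euclNorm_sq v
      rw [hv, one_pow] at h
      exact h.symm
    obtain ⟨j, hj⟩ := exists_large_coord hd v hv2
    set f : Ω → ℝ := fun ω => euclNorm (((1 : Matrix (Fin d) (Fin d) ℝ)
        - α • (D1 ω * gram X * D1 ω)).mulVec v) ^ q with hf
    have hfmeas : Measurable f := meas_f X D1 (hDmeas ()) v α q
    have hfnn : ∀ ω, 0 ≤ f ω := fun ω => Real.rpow_nonneg (euclNorm_nonneg _) q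
    set A := ⋂ i, (fun ω => D1 ω i i) ⁻¹' {if i = j then (1:ℝ) else 0} with hA
    have hAmeas : MeasurableSet A := MeasurableSet.iInter fun i =>
      (hDmeas () i i) (measurableSet_singleton _)
    have hAμ := hAfact j
    have hfle1 : ∀ᵐ ω ∂μ, f ω ≤ 1 := by
      filter_upwards [hnull] with ω hω
      have hdiag : D1 ω = Matrix.diagonal (fun i => D1 ω i i) := by
        ext i k
        by_cases h : i = k
        · subst h; simp [Matrix.diagonal_apply_eq]
        · rw [Matrix.diagonal_apply_ne _ h]; exact hDoff () ω i k h
      have h1 : euclNorm (((1 : Matrix (Fin d) (Fin d) ℝ)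
          - α • (D1 ω * gram X * D1 ω)).mulVec v) ≤ 1 := by
        conv_lhs => rw [hdiag]
        calc euclNorm (((1 : Matrix (Fin d) (Fin d) ℝ)
              - α • (Matrix.diagonal (fun i => D1 ω i i) * gram X *
                  Matrix.diagonal (fun i => D1 ω i i))).mulVec v)
            ≤ euclNorm v := contraction_of_01 X hd hα hα2.le _ hω v
          _ = 1 := hv
      exact Real.rpow_le_one (euclNorm_nonneg _) h1 hq0.le
    have hfA : ∀ ω ∈ A, f ω ≤ c₀ := by
      intro ω hωA
      have hdiagA : D1 ω = Matrix.diagonal (fun i => if i = j then (1:ℝ) else 0) := by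
        ext i k
        by_cases h : i = k
        · subst h
          have hmem : ω ∈ (fun ω => D1 ω i i) ⁻¹' {if i = j then (1:ℝ) else 0} := by
            rw [hA] at hωA
            exact Set.mem_iInter.mp hωA i
          simpa [Matrix.diagonal_apply_eq] using hmem
        · rw [Matrix.diagonal_apply_ne _ h]; exact hDoff () ω i k h
      have hle : euclNorm (((1 : Matrix (Fin d) (Fin d) ℝ)
          - α • (D1 ω * gram X * D1 ω)).mulVec v) ≤ ρ := by
        conv_lhs => rw [hdiagA]
        unfold euclNorm
        rw [hρ]
        apply Real.sqrt_le_sqrt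
        rw [singleton_sq X α j v, hv2]
        have hδj : δ j = 1 - (1 - α * gram X j j) ^ 2 := rfl
        have h1 : δm / d ≤ δ j * v j ^ 2 := by
          calc δm / d = δm * (1 / d) := by ring
            _ ≤ δ j * v j ^ 2 :=
                mul_le_mul (hδm_le j) hj (by positivity) (hδpos j).le
        rw [← hδj]
        linarith
      calc f ω ≤ ρ ^ q := Real.rpow_le_rpow (euclNorm_nonneg _) hle hq0.le
        _ = c₀ := rfl
    have hInt : Integrable f μ := by
      refine (integrable_const (1:ℝ)).mono' hfmeas.aestronglyMeasurable ?_
      filter_upwards [hfle1] with ω h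
      rwa [Real.norm_of_nonneg (hfnn ω)]
    have hIndInt : Integrable (fun ω => (1 - c₀) * A.indicator (fun _ => (1:ℝ)) ω) μ :=
      ((integrable_const (1:ℝ)).indicator hAmeas).const_mul _
    set g : Ω → ℝ := fun ω => 1 - (1 - c₀) * A.indicator (fun _ => (1:ℝ)) ω with hg
    have hgInt : Integrable g μ := (integrable_const (1:ℝ)).sub hIndInt
    have hfg : f ≤ᵐ[μ] g := by
      filter_upwards [hfle1] with ω h1
      simp only [hg]
      by_cases hω : ω ∈ A
      · rw [Set.indicator_of_mem hω]
        have := hfA ω hω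
        linarith
      · rw [Set.indicator_of_notMem hω]
        simp only [mul_zero]
        linarith
    have hAreal : (μ A).toReal = wP := by
      rw [hAμ, ENNReal.toReal_mul, ENNReal.toReal_pow, ENNReal.toReal_ofReal hp0.le,
        ENNReal.toReal_ofReal (by linarith)]
    calc (∫ ω, f ω ∂μ) ≤ ∫ ω, g ω ∂μ := integral_mono_ae hInt hgInt hfg
      _ = 1 - (1 - c₀) * (μ A).toReal := by
          rw [hg, integral_sub (integrable_const _) hIndInt, integral_const, probReal_univ,
            integral_const_mul, integral_indicator_const _ hAmeas]
          simp [Measure.real]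
      _ = B := by rw [hAreal, hB]
      _ ≤ B := le_refl _
  -- conclude
  have hTeq : contractionFactor μ
      (fun ω => (1 : Matrix (Fin d) (Fin d) ℝ) - α • (D1 ω * gram X * D1 ω)) q
      = sSup ((fun v => ∫ ω, euclNorm (((1 : Matrix (Fin d) (Fin d) ℝ)
          - α • (D1 ω * gram X * D1 ω)).mulVec v) ^ q ∂μ) ''
            {v | euclNorm v = 1}) ^ (1 / q) := rfl
  rw [hTeq]
  set T := ((fun v => ∫ ω, euclNorm (((1 : Matrix (Fin d) (Fin d) ℝ)
      - α • (D1 ω * gram X * D1 ω)).mulVec v) ^ q ∂μ) '' {v | euclNorm v = 1}) with hT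
  have hv0mem : euclNorm (fun i => if i = (⟨0, hd⟩ : Fin d) then (1:ℝ) else 0) = 1 :=
    euclNorm_single _
  have hx0T : (∫ ω, euclNorm (((1 : Matrix (Fin d) (Fin d) ℝ)
      - α • (D1 ω * gram X * D1 ω)).mulVec
        (fun i => if i = (⟨0, hd⟩ : Fin d) then (1:ℝ) else 0)) ^ q ∂μ) ∈ T :=
    ⟨_, hv0mem, rfl⟩
  have hTne : T.Nonempty := ⟨_, hx0T⟩
  have hTle : ∀ x ∈ T, x ≤ B := by
    rintro x ⟨v, hv, rfl⟩
    exact key v hv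
  have hsup_le : sSup T ≤ B := csSup_le hTne hTle
  have hsup_0 : 0 ≤ sSup T :=
    le_trans (integral_nonneg fun ω => Real.rpow_nonneg (euclNorm_nonneg _) q)
      (le_csSup ⟨B, hTle⟩ hx0T)
  exact Real.rpow_lt_one hsup_0 (lt_of_le_of_lt hsup_le hB_lt1) (by positivity)


end
end

section
/- Let q ≥ 2 and let x and y be random vectors in ℝ^d with E‖x‖₂^q < ∞ and E‖y‖₂^q < ∞. Then E| ‖x + y‖₂^q − ‖x‖₂^q − q‖x‖₂^{q−2} xᵀy | ≤ [(E‖x‖₂^q)^{1/q} + (E‖y‖₂^q)^{1/q}]^q − E‖x‖₂^q − q (E‖x‖₂^q)^{(q−1)/q} (E‖y‖₂^q)^{1/q}. -/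
set_option maxHeartbeats 1000000

open MeasureTheory ProbabilityTheory Filter Topology Matrix
open Set

noncomputable section

private lemma contRpow {c : ℝ} (hc : 0 ≤ c) : Continuous fun x : ℝ => x ^ c :=
  continuous_iff_continuousAt.2 fun x => Real.continuousAt_rpow_const x c (Or.inr hc)

private lemma rpow_two' (u : ℝ) : u ^ (2:ℝ) = u ^ 2 := by
  rw [show (2:ℝ) = ((2:ℕ):ℝ) by norm_num, Real.rpow_natCast]

private lemma sq_rpow {x : ℝ} (hx : 0 ≤ x) (r : ℝ) : (x ^ 2) ^ r = x ^ (2 * r) := by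
  rw [← rpow_two' x, ← Real.rpow_mul hx]

private lemma hasDerivAt_congr_deriv {f : ℝ → ℝ} {a b x : ℝ} (h : HasDerivAt f a x)
    (e : a = b) : HasDerivAt f b x := e ▸ h

/-- Abstract second-order comparison via MVT: if `f'' = φ' ≥ 0` and `φ' ≤ γ' = g''` on `[0,1]`,
then `|f 1 - f 0 - f' 0| ≤ g 1 - g 0 - g' 0`. -/
private lemma taylor_cmp {f φ φ' g γ γ' : ℝ → ℝ}
    (hf : ∀ t, HasDerivAt f (φ t) t) (hφ : ∀ t, HasDerivAt φ (φ' t) t)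
    (hg : ∀ t, HasDerivAt g (γ t) t) (hγ : ∀ t, HasDerivAt γ (γ' t) t)
    (h0 : ∀ t ∈ Icc (0:ℝ) 1, 0 ≤ φ' t) (hcmp : ∀ t ∈ Icc (0:ℝ) 1, φ' t ≤ γ' t) :
    |f 1 - f 0 - φ 0| ≤ g 1 - g 0 - γ 0 := by
  have hmφ : MonotoneOn φ (Icc (0:ℝ) 1) := by
    apply monotoneOn_of_deriv_nonneg (convex_Icc 0 1)
      (continuous_iff_continuousAt.2 fun t => (hφ t).continuousAt).continuousOn
    · intro t _; exact (hφ t).differentiableAt.differentiableWithinAt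
    · intro t ht
      rw [(hφ t).deriv]
      rw [interior_Icc] at ht
      exact h0 t (Ioo_subset_Icc_self ht)
  have hDd : ∀ t, HasDerivAt (fun t => γ t - φ t) (γ' t - φ' t) t := fun t => (hγ t).sub (hφ t)
  have hmD : MonotoneOn (fun t => γ t - φ t) (Icc (0:ℝ) 1) := by
    apply monotoneOn_of_deriv_nonneg (convex_Icc 0 1)
      (continuous_iff_continuousAt.2 fun t => (hDd t).continuousAt).continuousOn
    · intro t _; exact (hDd t).differentiableAt.differentiableWithinAt
    · intro t ht
      rw [(hDd t).deriv]
      rw [interior_Icc] at ht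
      have := hcmp t (Ioo_subset_Icc_self ht)
      linarith
  obtain ⟨ξ, hξ, hslope⟩ := exists_hasDerivAt_eq_slope f φ zero_lt_one
    (fun t _ => (hf t).continuousAt.continuousWithinAt) (fun t _ => hf t)
  obtain ⟨η, hη, hslope2⟩ := exists_hasDerivAt_eq_slope (fun t => g t - f t)
    (fun t => γ t - φ t) zero_lt_one
    (fun t _ => ((hg t).sub (hf t)).continuousAt.continuousWithinAt)
    (fun t _ => (hg t).sub (hf t))
  have hf10 : f 1 - f 0 = φ ξ := by rw [hslope]; norm_num
  have hgf : (g 1 - f 1) - (g 0 - f 0) = γ η - φ η := by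
    have : γ η - φ η = (g 1 - f 1 - (g 0 - f 0)) / (1 - 0) := hslope2
    rw [this]; norm_num
  have h0mem : (0:ℝ) ∈ Icc (0:ℝ) 1 := ⟨le_refl 0, zero_le_one⟩
  have hmφ0ξ : φ 0 ≤ φ ξ := hmφ h0mem (Ioo_subset_Icc_self hξ) hξ.1.le
  have hmD0η : γ 0 - φ 0 ≤ γ η - φ η := hmD h0mem (Ioo_subset_Icc_self hη) hη.1.le
  rw [abs_le]
  constructor <;> [linarith; linarith]

/-- Taylor identity: `∫_0^1 (1-t) q(q-1) (A+tB)^{q-2} B^2 dt = (A+B)^q - A^q - q A^{q-1} B`. -/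
private lemma taylor_id {q : ℝ} (hq : 2 ≤ q) {A B : ℝ} (hA : 0 ≤ A) (hB : 0 ≤ B) :
    ∫ t in (0:ℝ)..1, ((1 - t) * (q * (q - 1)) * (A + t * B) ^ (q - 2) * B ^ 2)
      = (A + B) ^ q - A ^ q - q * A ^ (q - 1) * B := by
  have hL : ∀ t : ℝ, HasDerivAt (fun t : ℝ => A + t * B) B t := by
    intro t
    simpa using ((hasDerivAt_id t).mul_const B).const_add A
  set u : ℝ → ℝ := fun t => (1 - t) * (q * B) * (A + t * B) ^ (q - 1) + (A + t * B) ^ q with hu_def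
  have hu : ∀ t ∈ Set.uIcc (0:ℝ) 1,
      HasDerivAt u ((1 - t) * (q * (q - 1)) * (A + t * B) ^ (q - 2) * B ^ 2) t := by
    intro t _
    have h1 : HasDerivAt (fun t : ℝ => (A + t * B) ^ (q - 1))
        (B * (q - 1) * (A + t * B) ^ (q - 2)) t := by
      have := (hL t).rpow_const (p := q - 1) (Or.inr (by linarith))
      simpa [show q - 1 - 1 = q - 2 by ring] using this
    have h2 : HasDerivAt (fun t : ℝ => (1 - t) * (q * B)) (-(q * B)) t := by
      simpa using ((hasDerivAt_const t (1:ℝ)).sub (hasDerivAt_id t)).mul_const (q * B)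
    have h4 : HasDerivAt (fun t : ℝ => (A + t * B) ^ q)
        (B * q * (A + t * B) ^ (q - 1)) t := by
      have := (hL t).rpow_const (p := q) (Or.inr (by linarith))
      simpa [mul_comm, mul_assoc] using this
    have := (h2.mul h1).add h4
    exact hasDerivAt_congr_deriv this (by ring)
  have hint : IntervalIntegrable
      (fun t => (1 - t) * (q * (q - 1)) * (A + t * B) ^ (q - 2) * B ^ 2) volume 0 1 := by
    apply Continuous.intervalIntegrable
    exact (((continuous_const.sub continuous_id).mul continuous_const).mul
      ((contRpow (by linarith : (0:ℝ) ≤ q - 2)).comp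
        (continuous_const.add (continuous_id.mul continuous_const)))).mul continuous_const
  rw [intervalIntegral.integral_eq_sub_of_hasDerivAt hu hint]
  have h0 : u 0 = q * B * A ^ (q - 1) + A ^ q := by simp [hu_def]
  have h1 : u 1 = (A + B) ^ q := by simp [hu_def]
  rw [h0, h1]; ring

private lemma key_eps {q : ℝ} (hq : 2 < q) {A B c : ℝ} (hA : 0 ≤ A) (hB : 0 ≤ B)
    (hc : |c| ≤ A * B) {ε : ℝ} (hε : 0 < ε) :
    |(A ^ 2 + 2 * c + B ^ 2 + ε) ^ (q / 2) - (A ^ 2 + ε) ^ (q / 2)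
        - q * (A ^ 2 + ε) ^ (q / 2 - 1) * c|
      ≤ (Real.sqrt (A ^ 2 + ε) + B) ^ q - Real.sqrt (A ^ 2 + ε) ^ q
        - q * Real.sqrt (A ^ 2 + ε) ^ (q - 1) * B := by
  have hc' := abs_le.mp hc
  set Aε := Real.sqrt (A ^ 2 + ε) with hAεdef
  have hAε_pos : 0 < Aε := Real.sqrt_pos.2 (by positivity)
  have hAεsq : Aε ^ 2 = A ^ 2 + ε := Real.sq_sqrt (by positivity)
  have hAAε : A ≤ Aε := by
    calc A = Real.sqrt (A ^ 2) := (Real.sqrt_sq hA).symm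
    _ ≤ Aε := Real.sqrt_le_sqrt (by linarith)
  have hP_pos : ∀ t : ℝ, 0 < A ^ 2 + ε + 2 * c * t + B ^ 2 * t ^ 2 := by
    intro t
    rcases le_or_gt 0 t with ht | ht
    · have h1 : -(A * B) * t ≤ c * t := mul_le_mul_of_nonneg_right hc'.1 ht
      nlinarith [sq_nonneg (A - t * B)]
    · have h1 : A * B * t ≤ c * t := mul_le_mul_of_nonpos_right hc'.2 ht.le
      nlinarith [sq_nonneg (A + t * B)]
  have hPd : ∀ t : ℝ, HasDerivAt (fun t : ℝ => A ^ 2 + ε + 2 * c * t + B ^ 2 * t ^ 2)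
      (2 * c + 2 * B ^ 2 * t) t := by
    intro t
    have h1 : HasDerivAt (fun t : ℝ => 2 * c * t) (2 * c) t := by
      simpa using (hasDerivAt_id t).const_mul (2 * c)
    have h2 : HasDerivAt (fun t : ℝ => B ^ 2 * t ^ 2) (B ^ 2 * (2 * t)) t := by
      simpa using (hasDerivAt_pow 2 t).const_mul (B ^ 2)
    exact hasDerivAt_congr_deriv (((hasDerivAt_const t (A ^ 2 + ε)).add h1).add h2) (by ring)
  have hP'd : ∀ t : ℝ, HasDerivAt (fun t : ℝ => 2 * c + 2 * B ^ 2 * t) (2 * B ^ 2) t := by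
    intro t
    simpa using ((hasDerivAt_id t).const_mul (2 * B ^ 2)).const_add (2 * c)
  have hLd : ∀ t : ℝ, HasDerivAt (fun t : ℝ => Aε + t * B) B t := by
    intro t
    simpa using ((hasDerivAt_id t).mul_const B).const_add Aε
  -- the six functions
  have hfd : ∀ t : ℝ, HasDerivAt (fun t : ℝ => (A ^ 2 + ε + 2 * c * t + B ^ 2 * t ^ 2) ^ (q / 2))
      (q / 2 * ((A ^ 2 + ε + 2 * c * t + B ^ 2 * t ^ 2) ^ (q / 2 - 1) * (2 * c + 2 * B ^ 2 * t)))
      t := by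
    intro t
    exact hasDerivAt_congr_deriv
      ((hPd t).rpow_const (p := q / 2) (Or.inl (hP_pos t).ne')) (by ring)
  have hφd : ∀ t : ℝ, HasDerivAt
      (fun t : ℝ => q / 2 *
        ((A ^ 2 + ε + 2 * c * t + B ^ 2 * t ^ 2) ^ (q / 2 - 1) * (2 * c + 2 * B ^ 2 * t)))
      (q / 2 * ((q / 2 - 1) * ((A ^ 2 + ε + 2 * c * t + B ^ 2 * t ^ 2) ^ (q / 2 - 2) *
          ((2 * c + 2 * B ^ 2 * t) * (2 * c + 2 * B ^ 2 * t)))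
        + (A ^ 2 + ε + 2 * c * t + B ^ 2 * t ^ 2) ^ (q / 2 - 1) * (2 * B ^ 2))) t := by
    intro t
    have hr := (hPd t).rpow_const (p := q / 2 - 1) (Or.inl (hP_pos t).ne')
    rw [show q / 2 - 1 - 1 = q / 2 - 2 by ring] at hr
    exact hasDerivAt_congr_deriv (HasDerivAt.const_mul (q / 2) (hr.mul (hP'd t))) (by ring)
  have hgd : ∀ t : ℝ, HasDerivAt (fun t : ℝ => (Aε + t * B) ^ q)
      (q * B * (Aε + t * B) ^ (q - 1)) t := by
    intro t
    exact hasDerivAt_congr_deriv ((hLd t).rpow_const (p := q) (Or.inr (by linarith))) (by ring)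
  have hγd : ∀ t : ℝ, HasDerivAt (fun t : ℝ => q * B * (Aε + t * B) ^ (q - 1))
      (q * B * (B * (q - 1) * (Aε + t * B) ^ (q - 2))) t := by
    intro t
    have hr := (hLd t).rpow_const (p := q - 1) (Or.inr (by linarith))
    rw [show q - 1 - 1 = q - 2 by ring] at hr
    exact hasDerivAt_congr_deriv (HasDerivAt.const_mul (q * B) hr) (by ring)
  -- second derivative nonnegativity and comparison
  have h0 : ∀ t ∈ Icc (0:ℝ) 1,
      0 ≤ q / 2 * ((q / 2 - 1) * ((A ^ 2 + ε + 2 * c * t + B ^ 2 * t ^ 2) ^ (q / 2 - 2) *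
          ((2 * c + 2 * B ^ 2 * t) * (2 * c + 2 * B ^ 2 * t)))
        + (A ^ 2 + ε + 2 * c * t + B ^ 2 * t ^ 2) ^ (q / 2 - 1) * (2 * B ^ 2)) := by
    intro t _
    have h1 : 0 ≤ (A ^ 2 + ε + 2 * c * t + B ^ 2 * t ^ 2) ^ (q / 2 - 2) :=
      Real.rpow_nonneg (hP_pos t).le _
    have h2 : 0 ≤ (A ^ 2 + ε + 2 * c * t + B ^ 2 * t ^ 2) ^ (q / 2 - 1) :=
      Real.rpow_nonneg (hP_pos t).le _
    have h5 : 0 ≤ (q / 2 - 1) * ((A ^ 2 + ε + 2 * c * t + B ^ 2 * t ^ 2) ^ (q / 2 - 2) *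
        ((2 * c + 2 * B ^ 2 * t) * (2 * c + 2 * B ^ 2 * t))) :=
      mul_nonneg (by linarith) (mul_nonneg h1 (mul_self_nonneg _))
    have h6 : 0 ≤ (A ^ 2 + ε + 2 * c * t + B ^ 2 * t ^ 2) ^ (q / 2 - 1) * (2 * B ^ 2) := by
      positivity
    have h7 : (0:ℝ) ≤ q / 2 := by linarith
    positivity
  have hcmp : ∀ t ∈ Icc (0:ℝ) 1,
      q / 2 * ((q / 2 - 1) * ((A ^ 2 + ε + 2 * c * t + B ^ 2 * t ^ 2) ^ (q / 2 - 2) *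
          ((2 * c + 2 * B ^ 2 * t) * (2 * c + 2 * B ^ 2 * t)))
        + (A ^ 2 + ε + 2 * c * t + B ^ 2 * t ^ 2) ^ (q / 2 - 1) * (2 * B ^ 2))
      ≤ q * B * (B * (q - 1) * (Aε + t * B) ^ (q - 2)) := by
    intro t ht
    have ht0 := ht.1
    have hs_pos : 0 < Aε + t * B := by nlinarith
    have hdisc : (2 * c + 2 * B ^ 2 * t) * (2 * c + 2 * B ^ 2 * t)
        ≤ 4 * B ^ 2 * (A ^ 2 + ε + 2 * c * t + B ^ 2 * t ^ 2) := by
      have hcsq : c ^ 2 ≤ (A * B) ^ 2 := by nlinarith [sq_abs c, abs_nonneg c]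
      nlinarith [mul_nonneg (sq_nonneg B) hε.le]
    have hRs : A ^ 2 + ε + 2 * c * t + B ^ 2 * t ^ 2 ≤ (Aε + t * B) ^ 2 := by
      have h2 : c ≤ Aε * B := le_trans hc'.2 (mul_le_mul_of_nonneg_right hAAε hB)
      have h3 : c * t ≤ Aε * B * t := mul_le_mul_of_nonneg_right h2 ht0
      nlinarith
    have e1 : (A ^ 2 + ε + 2 * c * t + B ^ 2 * t ^ 2) ^ (q / 2 - 2) *
        (A ^ 2 + ε + 2 * c * t + B ^ 2 * t ^ 2)
        = (A ^ 2 + ε + 2 * c * t + B ^ 2 * t ^ 2) ^ (q / 2 - 1) := by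
      rw [show q / 2 - 1 = q / 2 - 2 + 1 by ring, Real.rpow_add_one (hP_pos t).ne']
    have e2 : (A ^ 2 + ε + 2 * c * t + B ^ 2 * t ^ 2) ^ (q / 2 - 1)
        ≤ ((Aε + t * B) ^ 2) ^ (q / 2 - 1) :=
      Real.rpow_le_rpow (hP_pos t).le hRs (by linarith)
    have e3 : ((Aε + t * B) ^ 2) ^ (q / 2 - 1) = (Aε + t * B) ^ (q - 2) := by
      rw [sq_rpow hs_pos.le, show 2 * (q / 2 - 1) = q - 2 by ring]
    have h1 : 0 ≤ (A ^ 2 + ε + 2 * c * t + B ^ 2 * t ^ 2) ^ (q / 2 - 2) :=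
      Real.rpow_nonneg (hP_pos t).le _
    have step1 : (A ^ 2 + ε + 2 * c * t + B ^ 2 * t ^ 2) ^ (q / 2 - 2) *
        ((2 * c + 2 * B ^ 2 * t) * (2 * c + 2 * B ^ 2 * t))
        ≤ 4 * B ^ 2 * (A ^ 2 + ε + 2 * c * t + B ^ 2 * t ^ 2) ^ (q / 2 - 1) := by
      calc (A ^ 2 + ε + 2 * c * t + B ^ 2 * t ^ 2) ^ (q / 2 - 2) *
          ((2 * c + 2 * B ^ 2 * t) * (2 * c + 2 * B ^ 2 * t))
          ≤ (A ^ 2 + ε + 2 * c * t + B ^ 2 * t ^ 2) ^ (q / 2 - 2) *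
            (4 * B ^ 2 * (A ^ 2 + ε + 2 * c * t + B ^ 2 * t ^ 2)) :=
            mul_le_mul_of_nonneg_left hdisc h1
      _ = 4 * B ^ 2 * ((A ^ 2 + ε + 2 * c * t + B ^ 2 * t ^ 2) ^ (q / 2 - 2) *
            (A ^ 2 + ε + 2 * c * t + B ^ 2 * t ^ 2)) := by ring
      _ = 4 * B ^ 2 * (A ^ 2 + ε + 2 * c * t + B ^ 2 * t ^ 2) ^ (q / 2 - 1) := by rw [e1]
    have step2 : (A ^ 2 + ε + 2 * c * t + B ^ 2 * t ^ 2) ^ (q / 2 - 1)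
        ≤ (Aε + t * B) ^ (q - 2) := e3 ▸ e2
    have hX1 : 0 ≤ (A ^ 2 + ε + 2 * c * t + B ^ 2 * t ^ 2) ^ (q / 2 - 1) :=
      Real.rpow_nonneg (hP_pos t).le _
    have hY : 0 ≤ (Aε + t * B) ^ (q - 2) := Real.rpow_nonneg hs_pos.le _
    nlinarith [mul_le_mul_of_nonneg_left step1 (show (0:ℝ) ≤ q / 2 * (q / 2 - 1) by exact mul_nonneg (by linarith) (by linarith)),
      mul_le_mul_of_nonneg_left step2 (show (0:ℝ) ≤ q * (q - 1) * B ^ 2 by exact mul_nonneg (mul_nonneg (by linarith) (by linarith)) (sq_nonneg B))]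
  have main := taylor_cmp hfd hφd hgd hγd h0 hcmp
  have e1 : (A ^ 2 + ε + 2 * c * 1 + B ^ 2 * 1 ^ 2 : ℝ) = A ^ 2 + 2 * c + B ^ 2 + ε := by ring
  have e2 : (A ^ 2 + ε + 2 * c * 0 + B ^ 2 * 0 ^ 2 : ℝ) = A ^ 2 + ε := by ring
  have e3 : (Aε + 1 * B : ℝ) = Aε + B := by ring
  have e4 : (Aε + 0 * B : ℝ) = Aε := by ring
  rw [e1, e2, e3, e4] at main
  calc |(A ^ 2 + 2 * c + B ^ 2 + ε) ^ (q / 2) - (A ^ 2 + ε) ^ (q / 2)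
      - q * (A ^ 2 + ε) ^ (q / 2 - 1) * c|
      = |(A ^ 2 + 2 * c + B ^ 2 + ε) ^ (q / 2) - (A ^ 2 + ε) ^ (q / 2)
        - q / 2 * ((A ^ 2 + ε) ^ (q / 2 - 1) * (2 * c + 2 * B ^ 2 * 0))| := by
        congr 1; ring
  _ ≤ (Aε + B) ^ q - Aε ^ q - q * B * Aε ^ (q - 1) := main
  _ = (Aε + B) ^ q - Aε ^ q - q * Aε ^ (q - 1) * B := by ring


private lemma pointwise_bound {q : ℝ} (hq : 2 ≤ q) {A B c : ℝ} (hA : 0 ≤ A) (hB : 0 ≤ B)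
    (hc : |c| ≤ A * B) :
    |(A ^ 2 + 2 * c + B ^ 2) ^ (q / 2) - A ^ q - q * A ^ (q - 2) * c|
      ≤ (A + B) ^ q - A ^ q - q * A ^ (q - 1) * B := by
  rcases eq_or_lt_of_le hq with rfl | hq2
  · -- q = 2
    norm_num
    rw [show A ^ 2 + 2 * c + B ^ 2 - A ^ 2 - 2 * c = B ^ 2 by ring, abs_of_nonneg (sq_nonneg B)]
    nlinarith [sq_nonneg (A + B)]
  · -- q > 2 : take ε → 0⁺ in key_eps
    have hq0 : (0:ℝ) ≤ q := by linarith
    have lhs_lim : Tendsto (fun ε : ℝ =>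
        |(A ^ 2 + 2 * c + B ^ 2 + ε) ^ (q / 2) - (A ^ 2 + ε) ^ (q / 2)
          - q * (A ^ 2 + ε) ^ (q / 2 - 1) * c|) (𝓝[>] 0)
        (𝓝 |(A ^ 2 + 2 * c + B ^ 2) ^ (q / 2) - A ^ q - q * A ^ (q - 2) * c|) := by
      have C1 : Continuous fun ε : ℝ => (A ^ 2 + 2 * c + B ^ 2 + ε) ^ (q / 2) :=
        (contRpow (by linarith)).comp (continuous_const.add continuous_id)
      have C2 : Continuous fun ε : ℝ => (A ^ 2 + ε) ^ (q / 2) :=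
        (contRpow (by linarith)).comp (continuous_const.add continuous_id)
      have C3 : Continuous fun ε : ℝ => q * (A ^ 2 + ε) ^ (q / 2 - 1) * c :=
        ((continuous_const.mul ((contRpow (by linarith)).comp
          (continuous_const.add continuous_id))).mul continuous_const)
      have C : Continuous fun ε : ℝ =>
          |(A ^ 2 + 2 * c + B ^ 2 + ε) ^ (q / 2) - (A ^ 2 + ε) ^ (q / 2)
            - q * (A ^ 2 + ε) ^ (q / 2 - 1) * c| := ((C1.sub C2).sub C3).abs
      apply Tendsto.mono_left _ (nhdsWithin_le_nhds (s := Set.Ioi (0:ℝ)))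
      apply C.tendsto' 0
      simp only [add_zero]
      rw [sq_rpow hA, sq_rpow hA, show 2 * (q / 2) = q by ring,
        show 2 * (q / 2 - 1) = q - 2 by ring]
    have rhs_lim : Tendsto (fun ε : ℝ =>
        (Real.sqrt (A ^ 2 + ε) + B) ^ q - Real.sqrt (A ^ 2 + ε) ^ q
          - q * Real.sqrt (A ^ 2 + ε) ^ (q - 1) * B) (𝓝[>] 0)
        (𝓝 ((A + B) ^ q - A ^ q - q * A ^ (q - 1) * B)) := by
      have CS : Continuous fun ε : ℝ => Real.sqrt (A ^ 2 + ε) :=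
        Real.continuous_sqrt.comp (continuous_const.add continuous_id)
      have C : Continuous fun ε : ℝ =>
          (Real.sqrt (A ^ 2 + ε) + B) ^ q - Real.sqrt (A ^ 2 + ε) ^ q
            - q * Real.sqrt (A ^ 2 + ε) ^ (q - 1) * B :=
        (((contRpow hq0).comp (CS.add continuous_const)).sub
          ((contRpow hq0).comp CS)).sub
          ((continuous_const.mul ((contRpow (by linarith)).comp CS)).mul continuous_const)
      apply Tendsto.mono_left _ (nhdsWithin_le_nhds (s := Set.Ioi (0:ℝ)))
      apply C.tendsto' 0
      simp only [add_zero]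
      rw [Real.sqrt_sq hA]
    exact le_of_tendsto_of_tendsto lhs_lim rhs_lim
      (eventually_mem_nhdsWithin.mono fun ε hε => key_eps hq2 hA hB hc hε)

private lemma expect_psi_le {Ω : Type} [MeasurableSpace Ω] (μ : Measure Ω)
    [IsProbabilityMeasure μ] {q : ℝ} (hq : 2 ≤ q) {A B : Ω → ℝ}
    (hAm : Measurable A) (hBm : Measurable B)
    (hA0 : ∀ ω, 0 ≤ A ω) (hB0 : ∀ ω, 0 ≤ B ω)
    (hAq : Integrable (fun ω => A ω ^ q) μ) (hBq : Integrable (fun ω => B ω ^ q) μ) :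
    ∫ ω, ((A ω + B ω) ^ q - A ω ^ q - q * A ω ^ (q - 1) * B ω) ∂μ
      ≤ ((∫ ω, A ω ^ q ∂μ) ^ (1/q) + (∫ ω, B ω ^ q ∂μ) ^ (1/q)) ^ q
        - (∫ ω, A ω ^ q ∂μ)
        - q * (∫ ω, A ω ^ q ∂μ) ^ ((q-1)/q) * (∫ ω, B ω ^ q ∂μ) ^ (1/q) := by
  have hq0 : (0:ℝ) < q := by linarith
  have hq20 : (0:ℝ) ≤ q - 2 := by linarith
  have hqq0 : (0:ℝ) ≤ q * (q - 1) := by nlinarith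
  have hIA : (0:ℝ) ≤ ∫ ω, A ω ^ q ∂μ := integral_nonneg fun ω => Real.rpow_nonneg (hA0 ω) q
  have hIB : (0:ℝ) ≤ ∫ ω, B ω ^ q ∂μ := integral_nonneg fun ω => Real.rpow_nonneg (hB0 ω) q
  set IA := ∫ ω, A ω ^ q ∂μ with hIAdef
  set IB := ∫ ω, B ω ^ q ∂μ with hIBdef
  set a := IA ^ (1/q) with hadef
  set b := IB ^ (1/q) with hbdef
  have ha0 : 0 ≤ a := Real.rpow_nonneg hIA _
  have hb0 : 0 ≤ b := Real.rpow_nonneg hIB _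
  have haq : a ^ q = IA := by
    rw [hadef, ← Real.rpow_mul hIA, one_div, inv_mul_cancel₀ hq0.ne', Real.rpow_one]
  have hbq : b ^ q = IB := by
    rw [hbdef, ← Real.rpow_mul hIB, one_div, inv_mul_cancel₀ hq0.ne', Real.rpow_one]
  have haq1 : IA ^ ((q-1)/q) = a ^ (q-1) := by
    rw [hadef, ← Real.rpow_mul hIA]; congr 1; field_simp
  rw [haq1, ← haq]
  -- nonnegativity of the t-integrand
  have hGnn0 : ∀ (C D : ℝ), 0 ≤ C → 0 ≤ D → ∀ t ∈ Set.Ioc (0:ℝ) 1,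
      0 ≤ (1 - t) * (q * (q - 1)) * (C + t * D) ^ (q - 2) * D ^ 2 := by
    intro C D hC hD t ht
    exact mul_nonneg (mul_nonneg (mul_nonneg (by linarith [ht.2]) hqq0)
      (Real.rpow_nonneg (add_nonneg hC (mul_nonneg ht.1.le hD)) _)) (sq_nonneg _)
  have hGcont : ∀ C D : ℝ, Continuous fun t : ℝ =>
      (1 - t) * (q * (q - 1)) * (C + t * D) ^ (q - 2) * D ^ 2 := by
    intro C D
    exact (((continuous_const.sub continuous_id).mul continuous_const).mul
      ((contRpow hq20).comp (continuous_const.add (continuous_id.mul continuous_const)))).mul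
      continuous_const
  have hGint : ∀ C D : ℝ, IntegrableOn (fun t : ℝ =>
      (1 - t) * (q * (q - 1)) * (C + t * D) ^ (q - 2) * D ^ 2) (Set.Ioc (0:ℝ) 1) volume :=
    fun C D => ((hGcont C D).integrableOn_Icc).mono_set Set.Ioc_subset_Icc_self
  have hGval : ∀ C D : ℝ, 0 ≤ C → 0 ≤ D →
      ∫ t in Set.Ioc (0:ℝ) 1, ((1 - t) * (q * (q - 1)) * (C + t * D) ^ (q - 2) * D ^ 2)
        = (C + D) ^ q - C ^ q - q * C ^ (q - 1) * D := by
    intro C D hC hD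
    rw [← intervalIntegral.integral_of_le zero_le_one]
    exact taylor_id hq hC hD
  -- ψ facts
  have hψ_eq : ∀ ω, (A ω + B ω) ^ q - A ω ^ q - q * A ω ^ (q - 1) * B ω
      = ∫ t in Set.Ioc (0:ℝ) 1,
          ((1 - t) * (q * (q - 1)) * (A ω + t * B ω) ^ (q - 2) * B ω ^ 2) :=
    fun ω => (hGval _ _ (hA0 ω) (hB0 ω)).symm
  have hψ_nonneg : ∀ ω, 0 ≤ (A ω + B ω) ^ q - A ω ^ q - q * A ω ^ (q - 1) * B ω := by
    intro ω
    rw [hψ_eq ω]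
    exact setIntegral_nonneg measurableSet_Ioc (hGnn0 _ _ (hA0 ω) (hB0 ω))
  have hψm : Measurable fun ω => (A ω + B ω) ^ q - A ω ^ q - q * A ω ^ (q - 1) * B ω := by
    exact (((contRpow hq0.le).measurable.comp (hAm.add hBm)).sub
      ((contRpow hq0.le).measurable.comp hAm)).sub
      ((measurable_const.mul ((contRpow (by linarith : (0:ℝ) ≤ q - 1)).measurable.comp hAm)).mul
        hBm)
  rw [integral_eq_lintegral_of_nonneg_ae (ae_of_all _ hψ_nonneg) hψm.aestronglyMeasurable]
  -- convert each ψ ω into a lintegral in t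
  have hofψ : ∀ ω, ENNReal.ofReal ((A ω + B ω) ^ q - A ω ^ q - q * A ω ^ (q - 1) * B ω)
      = ∫⁻ t in Set.Ioc (0:ℝ) 1,
          ENNReal.ofReal ((1 - t) * (q * (q - 1)) * (A ω + t * B ω) ^ (q - 2) * B ω ^ 2) := by
    intro ω
    rw [hψ_eq ω]
    exact ofReal_integral_eq_lintegral_ofReal (hGint _ _)
      ((ae_restrict_iff' measurableSet_Ioc).2 (ae_of_all _ (hGnn0 _ _ (hA0 ω) (hB0 ω))))
  rw [lintegral_congr hofψ]
  -- Tonelli swap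
  have hHm : Measurable fun p : Ω × ℝ =>
      ENNReal.ofReal ((1 - p.2) * (q * (q - 1)) * (A p.1 + p.2 * B p.1) ^ (q - 2) * B p.1 ^ 2) := by
    apply ENNReal.measurable_ofReal.comp
    exact (((measurable_const.sub measurable_snd).mul measurable_const).mul
      ((contRpow hq20).measurable.comp
        ((hAm.comp measurable_fst).add (measurable_snd.mul (hBm.comp measurable_fst))))).mul
      ((hBm.comp measurable_fst).pow_const 2)
  rw [lintegral_lintegral_swap hHm.aemeasurable]
  -- the per-t bound
  have key : ∀ t ∈ Set.Ioc (0:ℝ) 1,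
      (∫⁻ ω, ENNReal.ofReal ((1 - t) * (q * (q - 1)) * (A ω + t * B ω) ^ (q - 2) * B ω ^ 2) ∂μ)
        ≤ ENNReal.ofReal ((1 - t) * (q * (q - 1)) * (a + t * b) ^ (q - 2) * b ^ 2) := by
    intro t ht
    have ht0 : 0 ≤ t := ht.1.le
    have ht1 : t ≤ 1 := ht.2
    have hconst0 : 0 ≤ (1 - t) * (q * (q - 1)) := mul_nonneg (by linarith) hqq0
    have hαm : Measurable fun ω => ENNReal.ofReal (A ω) := ENNReal.measurable_ofReal.comp hAm
    have hβm : Measurable fun ω => ENNReal.ofReal (B ω) := ENNReal.measurable_ofReal.comp hBm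
    have hlA : ∫⁻ ω, ENNReal.ofReal (A ω) ^ q ∂μ = ENNReal.ofReal IA := by
      have e : ∀ ω, ENNReal.ofReal (A ω) ^ q = ENNReal.ofReal (A ω ^ q) :=
        fun ω => ENNReal.ofReal_rpow_of_nonneg (hA0 ω) hq0.le
      rw [lintegral_congr e, ← ofReal_integral_eq_lintegral_ofReal hAq
        (ae_of_all _ fun ω => Real.rpow_nonneg (hA0 ω) q)]
    have hlB : ∫⁻ ω, ENNReal.ofReal (B ω) ^ q ∂μ = ENNReal.ofReal IB := by
      have e : ∀ ω, ENNReal.ofReal (B ω) ^ q = ENNReal.ofReal (B ω ^ q) :=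
        fun ω => ENNReal.ofReal_rpow_of_nonneg (hB0 ω) hq0.le
      rw [lintegral_congr e, ← ofReal_integral_eq_lintegral_ofReal hBq
        (ae_of_all _ fun ω => Real.rpow_nonneg (hB0 ω) q)]
    have hofa : ENNReal.ofReal a = ENNReal.ofReal IA ^ (1/q) := by
      rw [hadef]; exact (ENNReal.ofReal_rpow_of_nonneg hIA (p := 1/q) (by positivity)).symm
    have hofb : ENNReal.ofReal b = ENNReal.ofReal IB ^ (1/q) := by
      rw [hbdef]; exact (ENNReal.ofReal_rpow_of_nonneg hIB (p := 1/q) (by positivity)).symm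
    -- Minkowski
    have hMink : (∫⁻ ω, (ENNReal.ofReal (A ω) + ENNReal.ofReal t * ENNReal.ofReal (B ω)) ^ q ∂μ)
        ≤ (ENNReal.ofReal (a + t * b)) ^ q := by
      have h1 := ENNReal.lintegral_Lp_add_le (μ := μ)
        (f := fun ω => ENNReal.ofReal (A ω)) (g := fun ω => ENNReal.ofReal t * ENNReal.ofReal (B ω))
        hαm.aemeasurable (measurable_const.mul hβm).aemeasurable (by linarith : (1:ℝ) ≤ q)
      have h2 : ∫⁻ ω, (ENNReal.ofReal t * ENNReal.ofReal (B ω)) ^ q ∂μ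
          = ENNReal.ofReal t ^ q * ENNReal.ofReal IB := by
        have e : ∀ ω, (ENNReal.ofReal t * ENNReal.ofReal (B ω)) ^ q
            = ENNReal.ofReal t ^ q * ENNReal.ofReal (B ω) ^ q :=
          fun ω => ENNReal.mul_rpow_of_nonneg _ _ hq0.le
        rw [lintegral_congr e, lintegral_const_mul _ (hβm.pow_const q), hlB]
      have h3 : (∫⁻ ω, (ENNReal.ofReal t * ENNReal.ofReal (B ω)) ^ q ∂μ) ^ (1/q)
          = ENNReal.ofReal t * ENNReal.ofReal IB ^ (1/q) := by
        rw [h2, ENNReal.mul_rpow_of_nonneg _ _ (by positivity : (0:ℝ) ≤ 1/q),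
          ← ENNReal.rpow_mul, mul_one_div_cancel hq0.ne', ENNReal.rpow_one]
      rw [h3, hlA] at h1
      -- h1 : (∫⁻ (f+g)^q)^{1/q} ≤ ofReal IA ^(1/q) + ofReal t * ofReal IB^(1/q)
      have h4 : (∫⁻ ω, (ENNReal.ofReal (A ω) + ENNReal.ofReal t * ENNReal.ofReal (B ω)) ^ q ∂μ)
          = ((∫⁻ ω, (ENNReal.ofReal (A ω) + ENNReal.ofReal t * ENNReal.ofReal (B ω)) ^ q ∂μ)
              ^ (1/q)) ^ q := by
        rw [← ENNReal.rpow_mul, one_div, inv_mul_cancel₀ hq0.ne', ENNReal.rpow_one]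
      rw [h4]
      have h5 : ENNReal.ofReal (a + t * b)
          = ENNReal.ofReal IA ^ (1/q) + ENNReal.ofReal t * ENNReal.ofReal IB ^ (1/q) := by
        rw [ENNReal.ofReal_add ha0 (mul_nonneg ht0 hb0), ENNReal.ofReal_mul ht0, hofa, hofb]
      rw [h5]
      exact ENNReal.rpow_le_rpow (by exact h1) hq0.le
    -- pointwise rearrangement of the integrand
    have hint_e : ∀ ω, ENNReal.ofReal
        ((1 - t) * (q * (q - 1)) * (A ω + t * B ω) ^ (q - 2) * B ω ^ 2)
        = ENNReal.ofReal ((1 - t) * (q * (q - 1))) *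
          ((ENNReal.ofReal (A ω) + ENNReal.ofReal t * ENNReal.ofReal (B ω)) ^ (q - 2) *
            ENNReal.ofReal (B ω) ^ (2:ℝ)) := by
      intro ω
      have hAB0 : 0 ≤ A ω + t * B ω := add_nonneg (hA0 ω) (mul_nonneg ht0 (hB0 ω))
      rw [show (1 - t) * (q * (q - 1)) * (A ω + t * B ω) ^ (q - 2) * B ω ^ 2
          = (1 - t) * (q * (q - 1)) * ((A ω + t * B ω) ^ (q - 2) * B ω ^ (2:ℝ)) by
            rw [rpow_two']; ring,
        ENNReal.ofReal_mul hconst0,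
        ENNReal.ofReal_mul (Real.rpow_nonneg hAB0 _),
        ← ENNReal.ofReal_rpow_of_nonneg hAB0 hq20,
        ← ENNReal.ofReal_rpow_of_nonneg (hB0 ω) (by norm_num : (0:ℝ) ≤ 2),
        ENNReal.ofReal_add (hA0 ω) (mul_nonneg ht0 (hB0 ω)), ENNReal.ofReal_mul ht0]
    calc ∫⁻ ω, ENNReal.ofReal ((1 - t) * (q * (q - 1)) * (A ω + t * B ω) ^ (q - 2) * B ω ^ 2) ∂μ
        = ENNReal.ofReal ((1 - t) * (q * (q - 1))) *
          ∫⁻ ω, (ENNReal.ofReal (A ω) + ENNReal.ofReal t * ENNReal.ofReal (B ω)) ^ (q - 2) *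
            ENNReal.ofReal (B ω) ^ (2:ℝ) ∂μ := by
          rw [lintegral_congr hint_e, lintegral_const_mul]
          exact ((hαm.add (measurable_const.mul hβm)).pow_const _).mul (hβm.pow_const _)
    _ ≤ ENNReal.ofReal ((1 - t) * (q * (q - 1))) *
          ((ENNReal.ofReal (a + t * b)) ^ (q - 2) * (ENNReal.ofReal b) ^ (2:ℝ)) := by
          apply mul_le_mul_right
          -- Hölder (or the trivial case q = 2)
          rcases eq_or_lt_of_le hq with rfl | hq2
          · -- q = 2
            simp only [show (2:ℝ) - 2 = 0 by norm_num, ENNReal.rpow_zero, one_mul]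
            rw [hlB, hofb, ← ENNReal.rpow_mul]
            norm_num
          · -- q > 2
            have hq2' : (0:ℝ) < q - 2 := by linarith
            have hconj : (q / (q - 2)).HolderConjugate (q / 2) := by
              rw [Real.holderConjugate_iff]
              constructor
              · rw [lt_div_iff₀ hq2']; linarith
              · rw [inv_div, inv_div, ← add_div, show q - 2 + 2 = q by ring,
                  div_self hq0.ne']
            have hfm : Measurable fun ω =>
                (ENNReal.ofReal (A ω) + ENNReal.ofReal t * ENNReal.ofReal (B ω)) ^ (q - 2) :=
              (hαm.add (measurable_const.mul hβm)).pow_const _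
            have hgm : Measurable fun ω => ENNReal.ofReal (B ω) ^ (2:ℝ) := hβm.pow_const _
            have hH := ENNReal.lintegral_mul_le_Lp_mul_Lq μ hconj hfm.aemeasurable
              hgm.aemeasurable
            simp only [Pi.mul_apply] at hH
            have e1 : ∫⁻ ω, ((ENNReal.ofReal (A ω) + ENNReal.ofReal t * ENNReal.ofReal (B ω))
                ^ (q - 2)) ^ (q / (q - 2)) ∂μ
                = ∫⁻ ω, (ENNReal.ofReal (A ω) + ENNReal.ofReal t * ENNReal.ofReal (B ω)) ^ q ∂μ :=
              lintegral_congr fun ω => by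
                rw [← ENNReal.rpow_mul, show (q - 2) * (q / (q - 2)) = q by field_simp]
            have e2 : ∫⁻ ω, (ENNReal.ofReal (B ω) ^ (2:ℝ)) ^ (q / 2) ∂μ
                = ∫⁻ ω, ENNReal.ofReal (B ω) ^ q ∂μ :=
              lintegral_congr fun ω => by
                rw [← ENNReal.rpow_mul, show (2:ℝ) * (q / 2) = q by field_simp]
            rw [e1, e2, hlB, one_div_div, one_div_div] at hH
            refine le_trans hH (mul_le_mul' ?_ ?_)
            · calc (∫⁻ ω, (ENNReal.ofReal (A ω) + ENNReal.ofReal t * ENNReal.ofReal (B ω)) ^ q ∂μ)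
                  ^ ((q - 2) / q)
                  ≤ ((ENNReal.ofReal (a + t * b)) ^ q) ^ ((q - 2) / q) :=
                    ENNReal.rpow_le_rpow hMink (by positivity)
              _ = (ENNReal.ofReal (a + t * b)) ^ (q - 2) := by
                  rw [← ENNReal.rpow_mul, show q * ((q - 2) / q) = q - 2 by field_simp]
            · have : (ENNReal.ofReal b) ^ (2:ℝ) = ENNReal.ofReal IB ^ (2 / q) := by
                rw [hofb, ← ENNReal.rpow_mul]
                congr 1
                ring
              exact this.ge
    _ = ENNReal.ofReal ((1 - t) * (q * (q - 1)) * (a + t * b) ^ (q - 2) * b ^ 2) := by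
          rw [show (1 - t) * (q * (q - 1)) * (a + t * b) ^ (q - 2) * b ^ 2
              = (1 - t) * (q * (q - 1)) * ((a + t * b) ^ (q - 2) * b ^ (2:ℝ)) by
                rw [rpow_two']; ring,
            ENNReal.ofReal_mul hconst0,
            ENNReal.ofReal_mul (Real.rpow_nonneg (add_nonneg ha0 (mul_nonneg ht0 hb0)) _),
            ← ENNReal.ofReal_rpow_of_nonneg (add_nonneg ha0 (mul_nonneg ht0 hb0)) hq20,
            ← ENNReal.ofReal_rpow_of_nonneg hb0 (by norm_num : (0:ℝ) ≤ 2)]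
  -- assemble
  have hfin : (∫⁻ t in Set.Ioc (0:ℝ) 1, ∫⁻ ω,
      ENNReal.ofReal ((1 - t) * (q * (q - 1)) * (A ω + t * B ω) ^ (q - 2) * B ω ^ 2) ∂μ)
      ≤ ENNReal.ofReal ((a + b) ^ q - a ^ q - q * a ^ (q - 1) * b) := by
    calc (∫⁻ t in Set.Ioc (0:ℝ) 1, ∫⁻ ω,
        ENNReal.ofReal ((1 - t) * (q * (q - 1)) * (A ω + t * B ω) ^ (q - 2) * B ω ^ 2) ∂μ)
        ≤ ∫⁻ t in Set.Ioc (0:ℝ) 1,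
            ENNReal.ofReal ((1 - t) * (q * (q - 1)) * (a + t * b) ^ (q - 2) * b ^ 2) :=
          setLIntegral_mono' measurableSet_Ioc key
    _ = ENNReal.ofReal (∫ t in Set.Ioc (0:ℝ) 1,
          ((1 - t) * (q * (q - 1)) * (a + t * b) ^ (q - 2) * b ^ 2)) :=
          (ofReal_integral_eq_lintegral_ofReal (hGint a b)
            ((ae_restrict_iff' measurableSet_Ioc).2 (ae_of_all _ (hGnn0 a b ha0 hb0)))).symm
    _ = ENNReal.ofReal ((a + b) ^ q - a ^ q - q * a ^ (q - 1) * b) := by rw [hGval a b ha0 hb0]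
  have hRHS0 : 0 ≤ (a + b) ^ q - a ^ q - q * a ^ (q - 1) * b := by
    rw [← hGval a b ha0 hb0]
    exact setIntegral_nonneg measurableSet_Ioc (hGnn0 a b ha0 hb0)
  exact ENNReal.toReal_le_of_le_ofReal hRHS0 hfin

/-- Moment inequality, version (ii).
For `q ≥ 2` and random vectors `x, y` in `ℝ^d` with finite `q`-th moments,
`E|‖x+y‖₂^q − ‖x‖₂^q − q‖x‖₂^{q−2} xᵀy|
   ≤ [(E‖x‖₂^q)^{1/q} + (E‖y‖₂^q)^{1/q}]^q − E‖x‖₂^q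
     − q (E‖x‖₂^q)^{(q−1)/q} (E‖y‖₂^q)^{1/q}`. -/
theorem statement_18
    {Ω : Type} [MeasurableSpace Ω] (μ : Measure Ω) [IsProbabilityMeasure μ]
    {d : ℕ} (q : ℝ) (hq : 2 ≤ q)
    (x y : Ω → Fin d → ℝ) (hx : Measurable x) (hy : Measurable y)
    (hxq : Integrable (fun ω => euclNorm (x ω) ^ q) μ)
    (hyq : Integrable (fun ω => euclNorm (y ω) ^ q) μ) :
    ∫ ω, |euclNorm (x ω + y ω) ^ q - euclNorm (x ω) ^ q
        - q * euclNorm (x ω) ^ (q - 2) * (x ω ⬝ᵥ y ω)| ∂μ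
      ≤ ((∫ ω, euclNorm (x ω) ^ q ∂μ) ^ (1 / q)
            + (∫ ω, euclNorm (y ω) ^ q ∂μ) ^ (1 / q)) ^ q
        - (∫ ω, euclNorm (x ω) ^ q ∂μ)
        - q * (∫ ω, euclNorm (x ω) ^ q ∂μ) ^ ((q - 1) / q)
            * (∫ ω, euclNorm (y ω) ^ q ∂μ) ^ (1 / q) := by
  have hq0 : (0:ℝ) < q := by linarith
  have hcontE : Continuous (euclNorm (d := d)) := by
    unfold euclNorm
    exact Real.continuous_sqrt.comp (continuous_finset_sum _ fun i _ => (continuous_apply i).pow 2)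
  have hA0 : ∀ ω, 0 ≤ euclNorm (x ω) := fun ω => Real.sqrt_nonneg _
  have hB0 : ∀ ω, 0 ≤ euclNorm (y ω) := fun ω => Real.sqrt_nonneg _
  have hAm : Measurable fun ω => euclNorm (x ω) := hcontE.measurable.comp hx
  have hBm : Measurable fun ω => euclNorm (y ω) := hcontE.measurable.comp hy
  have hCm : Measurable fun ω => x ω ⬝ᵥ y ω := by
    simp only [dotProduct]
    exact Finset.measurable_sum _ fun i _ =>
      ((measurable_pi_apply i).comp hx).mul ((measurable_pi_apply i).comp hy)
  have hsum_nonneg : ∀ (v : Fin d → ℝ), (0:ℝ) ≤ ∑ i, v i ^ 2 :=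
    fun v => Finset.sum_nonneg fun i _ => sq_nonneg _
  have hSx : ∀ ω, euclNorm (x ω) ^ 2 = ∑ i, x ω i ^ 2 := by
    intro ω; unfold euclNorm; exact Real.sq_sqrt (hsum_nonneg _)
  have hSy : ∀ ω, euclNorm (y ω) ^ 2 = ∑ i, y ω i ^ 2 := by
    intro ω; unfold euclNorm; exact Real.sq_sqrt (hsum_nonneg _)
  have hCS : ∀ ω, |x ω ⬝ᵥ y ω| ≤ euclNorm (x ω) * euclNorm (y ω) := by
    intro ω
    have h := Finset.sum_mul_sq_le_sq_mul_sq Finset.univ (x ω) (y ω)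
    unfold euclNorm
    simp only [dotProduct]
    rw [← Real.sqrt_sq_eq_abs, ← Real.sqrt_mul (hsum_nonneg _)]
    exact Real.sqrt_le_sqrt h
  have hEq : ∀ ω, euclNorm (x ω + y ω) ^ q
      = (euclNorm (x ω) ^ 2 + 2 * (x ω ⬝ᵥ y ω) + euclNorm (y ω) ^ 2) ^ (q / 2) := by
    intro ω
    have hsum : ∑ i, (x ω + y ω) i ^ 2
        = euclNorm (x ω) ^ 2 + 2 * (x ω ⬝ᵥ y ω) + euclNorm (y ω) ^ 2 := by
      rw [hSx ω, hSy ω]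
      simp only [Pi.add_apply, dotProduct]
      rw [Finset.sum_congr rfl (fun i _ => show (x ω i + y ω i) ^ 2
          = x ω i ^ 2 + 2 * (x ω i * y ω i) + y ω i ^ 2 by ring)]
      rw [Finset.sum_add_distrib, Finset.sum_add_distrib, ← Finset.mul_sum]
    have hQ := hsum_nonneg (x ω + y ω)
    rw [hsum] at hQ
    have h1 : euclNorm (x ω + y ω)
        = (euclNorm (x ω) ^ 2 + 2 * (x ω ⬝ᵥ y ω) + euclNorm (y ω) ^ 2) ^ ((1:ℝ)/2) := by
      have hdef : euclNorm (x ω + y ω) = Real.sqrt (∑ i, (x ω + y ω) i ^ 2) := rfl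
      rw [hdef, hsum, Real.sqrt_eq_rpow]
    rw [h1, ← Real.rpow_mul hQ, show (1:ℝ)/2*q = q/2 by ring]
  -- pointwise bound
  have hpt : ∀ ω, |euclNorm (x ω + y ω) ^ q - euclNorm (x ω) ^ q
        - q * euclNorm (x ω) ^ (q - 2) * (x ω ⬝ᵥ y ω)|
      ≤ (euclNorm (x ω) + euclNorm (y ω)) ^ q - euclNorm (x ω) ^ q
        - q * euclNorm (x ω) ^ (q - 1) * euclNorm (y ω) := by
    intro ω
    rw [hEq ω]
    exact pointwise_bound hq (hA0 ω) (hB0 ω) (hCS ω)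
  -- integrability of the dominating function ψ
  have hmax : ∀ ω, (euclNorm (x ω) + euclNorm (y ω)) ^ q
      ≤ 2 ^ q * (euclNorm (x ω) ^ q + euclNorm (y ω) ^ q) := by
    intro ω
    have h1 : euclNorm (x ω) + euclNorm (y ω) ≤ 2 * max (euclNorm (x ω)) (euclNorm (y ω)) := by
      have := add_le_add (le_max_left (euclNorm (x ω)) (euclNorm (y ω)))
        (le_max_right (euclNorm (x ω)) (euclNorm (y ω)))
      linarith
    have hmax0 : 0 ≤ max (euclNorm (x ω)) (euclNorm (y ω)) := le_trans (hA0 ω) (le_max_left _ _)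
    calc (euclNorm (x ω) + euclNorm (y ω)) ^ q ≤ (2 * max (euclNorm (x ω)) (euclNorm (y ω))) ^ q :=
          Real.rpow_le_rpow (add_nonneg (hA0 ω) (hB0 ω)) h1 hq0.le
    _ = 2 ^ q * (max (euclNorm (x ω)) (euclNorm (y ω))) ^ q :=
          Real.mul_rpow (by norm_num) hmax0
    _ ≤ 2 ^ q * (euclNorm (x ω) ^ q + euclNorm (y ω) ^ q) := by
          apply mul_le_mul_of_nonneg_left _ (Real.rpow_nonneg (by norm_num) q)
          rcases le_total (euclNorm (x ω)) (euclNorm (y ω)) with h | h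
          · rw [max_eq_right h]
            have := Real.rpow_nonneg (hA0 ω) q
            linarith
          · rw [max_eq_left h]
            have := Real.rpow_nonneg (hB0 ω) q
            linarith
  have hABq_int : Integrable (fun ω => (euclNorm (x ω) + euclNorm (y ω)) ^ q) μ := by
    apply Integrable.mono' ((hxq.add hyq).const_mul (2 ^ q))
    · exact ((contRpow hq0.le).measurable.comp (hAm.add hBm)).aestronglyMeasurable
    · refine ae_of_all _ fun ω => ?_
      rw [Real.norm_eq_abs,
        abs_of_nonneg (Real.rpow_nonneg (add_nonneg (hA0 ω) (hB0 ω)) q)]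
      exact hmax ω
  have hcross : ∀ ω, euclNorm (x ω) ^ (q-1) * euclNorm (y ω)
      ≤ (euclNorm (x ω) + euclNorm (y ω)) ^ q := by
    intro ω
    rcases eq_or_lt_of_le (add_nonneg (hA0 ω) (hB0 ω)) with h0 | h0
    · have hAz : euclNorm (x ω) = 0 := by have := hA0 ω; have := hB0 ω; linarith
      have hBz : euclNorm (y ω) = 0 := by have := hA0 ω; have := hB0 ω; linarith
      rw [hAz, hBz]
      simp [Real.zero_rpow (show q ≠ 0 by linarith)]
    · have h1 : euclNorm (x ω) ^ (q-1) ≤ (euclNorm (x ω) + euclNorm (y ω)) ^ (q-1) :=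
        Real.rpow_le_rpow (hA0 ω) (by linarith [hB0 ω]) (by linarith)
      have h2 : euclNorm (x ω) ^ (q-1) * euclNorm (y ω)
          ≤ (euclNorm (x ω) + euclNorm (y ω)) ^ (q-1) * (euclNorm (x ω) + euclNorm (y ω)) :=
        mul_le_mul h1 (by linarith [hA0 ω]) (hB0 ω) (Real.rpow_nonneg h0.le _)
      rwa [← Real.rpow_add_one h0.ne' (q-1), show q-1+1 = q by ring] at h2
  have hcross_int : Integrable (fun ω =>
      q * euclNorm (x ω) ^ (q-1) * euclNorm (y ω)) μ := by
    apply Integrable.mono' (hABq_int.const_mul q)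
    · exact ((measurable_const.mul
        ((contRpow (by linarith : (0:ℝ) ≤ q - 1)).measurable.comp hAm)).mul
        hBm).aestronglyMeasurable
    · refine ae_of_all _ fun ω => ?_
      rw [Real.norm_eq_abs, abs_of_nonneg (mul_nonneg (mul_nonneg hq0.le
        (Real.rpow_nonneg (hA0 ω) _)) (hB0 ω)), mul_assoc]
      exact mul_le_mul_of_nonneg_left (hcross ω) hq0.le
  have hψ_int : Integrable (fun ω => (euclNorm (x ω) + euclNorm (y ω)) ^ q
      - euclNorm (x ω) ^ q - q * euclNorm (x ω) ^ (q-1) * euclNorm (y ω)) μ :=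
    (hABq_int.sub hxq).sub hcross_int
  -- F is integrable
  have hFm : Measurable fun ω => euclNorm (x ω + y ω) ^ q - euclNorm (x ω) ^ q
      - q * euclNorm (x ω) ^ (q - 2) * (x ω ⬝ᵥ y ω) := by
    have h1 : Measurable fun ω => euclNorm (x ω + y ω) := hcontE.measurable.comp (hx.add hy)
    exact (((contRpow hq0.le).measurable.comp h1).sub
      ((contRpow hq0.le).measurable.comp hAm)).sub
      ((measurable_const.mul ((contRpow (by linarith : (0:ℝ) ≤ q - 2)).measurable.comp hAm)).mul
        hCm)
  have hF_int : Integrable (fun ω => euclNorm (x ω + y ω) ^ q - euclNorm (x ω) ^ q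
      - q * euclNorm (x ω) ^ (q - 2) * (x ω ⬝ᵥ y ω)) μ := by
    apply Integrable.mono' hψ_int hFm.aestronglyMeasurable
    refine ae_of_all _ fun ω => ?_
    rw [Real.norm_eq_abs]
    exact hpt ω
  calc ∫ ω, |euclNorm (x ω + y ω) ^ q - euclNorm (x ω) ^ q
        - q * euclNorm (x ω) ^ (q - 2) * (x ω ⬝ᵥ y ω)| ∂μ
      ≤ ∫ ω, ((euclNorm (x ω) + euclNorm (y ω)) ^ q - euclNorm (x ω) ^ q
        - q * euclNorm (x ω) ^ (q - 1) * euclNorm (y ω)) ∂μ :=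
        integral_mono hF_int.abs hψ_int hpt
  _ ≤ ((∫ ω, euclNorm (x ω) ^ q ∂μ) ^ (1 / q)
            + (∫ ω, euclNorm (y ω) ^ q ∂μ) ^ (1 / q)) ^ q
        - (∫ ω, euclNorm (x ω) ^ q ∂μ)
        - q * (∫ ω, euclNorm (x ω) ^ q ∂μ) ^ ((q - 1) / q)
            * (∫ ω, euclNorm (y ω) ^ q ∂μ) ^ (1 / q) :=
        expect_psi_le μ hq hAm hBm hA0 hB0 hxq hyq

end
end

section
/- Assume min_i (E[x₁x₁ᵀ])_{ii} > 0 and that E[y₁²] and E‖x₁‖₂² are finite. Then the function β ↦ E[(y₁ − x₁ᵀDβ)²/2], where the expectation is taken over both the sample (y₁, x₁) and an independent p-dropout matrix D, has the unique minimizer over ℝ^d given in closed form by β̆ = p(p²E[x₁x₁ᵀ] + p(1−p)Diag(E[x₁x₁ᵀ]))^{−1} E[y₁x₁] = (E[𝕏_{1,p}])^{−1} E[y₁x₁]. -/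
open MeasureTheory ProbabilityTheory Filter Topology Matrix

noncomputable section

/-- `D` is a `p`-dropout matrix: a random diagonal matrix whose diagonal entries are
i.i.d. Bernoulli(p) random variables. -/
def IsDropoutMatrix {Ω : Type} [MeasurableSpace Ω] (μ : Measure Ω) {d : ℕ} (p : ℝ)
    (D : Ω → Matrix (Fin d) (Fin d) ℝ) : Prop :=
  (∀ i j, Measurable fun ω => D ω i j) ∧
  (∀ ω i j, i ≠ j → D ω i j = 0) ∧
  iIndepFun (fun (i : Fin d) ω => D ω i i) μ ∧
  (∀ i, Measure.map (fun ω => D ω i i) μ = bernoulliReal p)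

/-- The marginalized dropout least-squares objective
`F(β) = E[(y₁ − x₁ᵀ D β)²/2]`, where the expectation is over both the sample `(y₁, x₁)`
and the independent dropout matrix `D`. -/
def dropoutLoss {Ω : Type} [MeasurableSpace Ω] (μ : Measure Ω) {d : ℕ}
    (x1 : Ω → Fin d → ℝ) (ε1 : Ω → ℝ) (βstar : Fin d → ℝ)
    (D : Ω → Matrix (Fin d) (Fin d) ℝ) (b : Fin d → ℝ) : ℝ :=
  ∫ ω, (x1 ω ⬝ᵥ βstar + ε1 ω - x1 ω ⬝ᵥ (D ω).mulVec b) ^ 2 / 2 ∂μ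

/-- `E[x₁x₁ᵀ]`. -/
def Exx {Ω : Type} [MeasurableSpace Ω] (μ : Measure Ω) {d : ℕ}
    (x1 : Ω → Fin d → ℝ) : Matrix (Fin d) (Fin d) ℝ :=
  Matrix.of fun i j => ∫ ω, x1 ω i * x1 ω j ∂μ

/-- `E[𝕏_{1,p}] = E[p x₁x₁ᵀ + (1-p) Diag(x₁x₁ᵀ)]`. -/
def ExxP {Ω : Type} [MeasurableSpace Ω] (μ : Measure Ω) {d : ℕ} (p : ℝ)
    (x1 : Ω → Fin d → ℝ) : Matrix (Fin d) (Fin d) ℝ :=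
  Matrix.of fun i j =>
    ∫ ω, (p * (x1 ω i * x1 ω j) + (1 - p) * if i = j then x1 ω i * x1 ω j else 0) ∂μ

/-- `E[y₁ x₁]`. -/
def Eyx {Ω : Type} [MeasurableSpace Ω] (μ : Measure Ω) {d : ℕ}
    (x1 : Ω → Fin d → ℝ) (ε1 : Ω → ℝ) (βstar : Fin d → ℝ) : Fin d → ℝ :=
  fun i => ∫ ω, (x1 ω ⬝ᵥ βstar + ε1 ω) * x1 ω i ∂μ

lemma integrable_dirac_meas (f : ℝ → ℝ) (hf : Measurable f) (a : ℝ) :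
    Integrable f (Measure.dirac a) := by
  refine ⟨hf.aestronglyMeasurable, ?_⟩
  simp only [HasFiniteIntegral]
  rw [lintegral_dirac' a (by exact hf.nnnorm.coe_nnreal_ennreal)]
  exact ENNReal.coe_lt_top

lemma bern_integral {p : ℝ} (hp0 : 0 ≤ p) (hp1 : p ≤ 1) (f : ℝ → ℝ) (hf : Measurable f) :
    ∫ t, f t ∂(bernoulliReal p) = p * f 1 + (1 - p) * f 0 := by
  unfold bernoulliReal
  rw [integral_add_measure ((integrable_dirac_meas f hf 1).smul_measure ENNReal.ofReal_ne_top)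
      ((integrable_dirac_meas f hf 0).smul_measure ENNReal.ofReal_ne_top),
    integral_smul_measure, integral_smul_measure, integral_dirac, integral_dirac,
    ENNReal.toReal_ofReal hp0, ENNReal.toReal_ofReal (by linarith)]
  simp [smul_eq_mul]

lemma abs_mul_le_half (a b : ℝ) : |a * b| ≤ (a ^ 2 + b ^ 2) / 2 := by
  rcases abs_cases (a * b) with ⟨h, _⟩ | ⟨h, _⟩ <;> rw [h] <;>
    nlinarith [sq_nonneg (a - b), sq_nonneg (a + b)]

lemma bern_compl {p : ℝ} : bernoulliReal p ({0, 1}ᶜ : Set ℝ) = 0 := by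
  have hs : MeasurableSet ({0, 1}ᶜ : Set ℝ) :=
    ((measurableSet_singleton 0).union (measurableSet_singleton 1)).compl.congr
      (by ext x; simp; tauto)
  simp [bernoulliReal, Measure.dirac_apply' _ hs, Set.indicator_apply]

/-- Closed-form solution of the marginalized dropout objective.
Under the reduced-form and moment assumptions, `β̆ = (E[𝕏_{1,p}])⁻¹ E[y₁x₁]`
(equivalently `p (p²E[x₁x₁ᵀ] + p(1−p)Diag(E[x₁x₁ᵀ]))⁻¹ E[y₁x₁]`) is the unique minimizer
of `β ↦ E[(y₁ − x₁ᵀ D β)²/2]` over `ℝ^d`. -/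
theorem statement_19
    {Ω : Type} [MeasurableSpace Ω] (μ : Measure Ω) [IsProbabilityMeasure μ]
    {d : ℕ} (p : ℝ) (hp : p ∈ Set.Ioo (0 : ℝ) 1)
    (x1 : Ω → Fin d → ℝ) (ε1 : Ω → ℝ) (βstar : Fin d → ℝ)
    (hx : Measurable x1) (hε : Measurable ε1)
    (hxε : IndepFun x1 ε1 μ)
    (hεmean : ∫ ω, ε1 ω ∂μ = 0) (hεvar : ∫ ω, ε1 ω ^ 2 ∂μ = 1)
    (hred : ∀ i : Fin d, 0 < ∫ ω, x1 ω i ^ 2 ∂μ)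
    (hymom : Integrable (fun ω => (x1 ω ⬝ᵥ βstar + ε1 ω) ^ 2) μ)
    (hxmom : Integrable (fun ω => euclNorm (x1 ω) ^ 2) μ)
    (D : Ω → Matrix (Fin d) (Fin d) ℝ)
    (hD : IsDropoutMatrix μ p D)
    (hDdata : IndepFun (fun ω => fun i : Fin d => D ω i i)
      (fun ω => (x1 ω, ε1 ω)) μ) :
    ((ExxP μ p x1)⁻¹.mulVec (Eyx μ x1 ε1 βstar)
        = p • ((p ^ 2 • Exx μ x1
            + (p * (1 - p)) • Matrix.diagonal fun i => Exx μ x1 i i)⁻¹.mulVec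
              (Eyx μ x1 ε1 βstar))) ∧
    (∀ b : Fin d → ℝ,
      dropoutLoss μ x1 ε1 βstar D ((ExxP μ p x1)⁻¹.mulVec (Eyx μ x1 ε1 βstar))
        ≤ dropoutLoss μ x1 ε1 βstar D b) ∧
    ∀ b : Fin d → ℝ,
      (∀ b' : Fin d → ℝ, dropoutLoss μ x1 ε1 βstar D b ≤ dropoutLoss μ x1 ε1 βstar D b')
        → b = (ExxP μ p x1)⁻¹.mulVec (Eyx μ x1 ε1 βstar) := by
  obtain ⟨hp0, hp1⟩ := hp
  set y : Ω → ℝ := fun ω => x1 ω ⬝ᵥ βstar + ε1 ω with hy_def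
  set S : Matrix (Fin d) (Fin d) ℝ := ExxP μ p x1 with hS_def
  set g : Fin d → ℝ := Eyx μ x1 ε1 βstar with hg_def
  set E : Matrix (Fin d) (Fin d) ℝ := Exx μ x1 with hE_def
  -- measurability
  have hxi : ∀ i, Measurable fun ω => x1 ω i := fun i => (measurable_pi_apply i).comp hx
  have hym : Measurable y := by
    apply Measurable.add _ hε
    exact Finset.measurable_sum _ fun i _ => (hxi i).mul_const _
  have hDm : ∀ i, Measurable fun ω => D ω i i := fun i => hD.1 i i
  -- integrability of covariate products
  have hx2 : ∀ i, Integrable (fun ω => x1 ω i ^ 2) μ := by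
    intro i
    refine hxmom.mono' ((hxi i).pow_const 2).aestronglyMeasurable (ae_of_all _ fun ω => ?_)
    have h1 : euclNorm (x1 ω) ^ 2 = ∑ j, x1 ω j ^ 2 := by
      rw [euclNorm, Real.sq_sqrt (Finset.sum_nonneg fun j _ => sq_nonneg _)]
    rw [Real.norm_eq_abs, abs_of_nonneg (sq_nonneg _), h1]
    exact Finset.single_le_sum (f := fun j => x1 ω j ^ 2) (fun j _ => sq_nonneg _) (Finset.mem_univ i)
  have hxx : ∀ i j, Integrable (fun ω => x1 ω i * x1 ω j) μ := by
    intro i j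
    refine (((hx2 i).add (hx2 j)).div_const 2).mono'
      ((hxi i).mul (hxi j)).aestronglyMeasurable (ae_of_all _ fun ω => ?_)
    simp only [Pi.add_apply]
    rw [Real.norm_eq_abs]
    exact abs_mul_le_half _ _
  have hyx : ∀ i, Integrable (fun ω => y ω * x1 ω i) μ := by
    intro i
    refine ((hymom.add (hx2 i)).div_const 2).mono'
      (hym.mul (hxi i)).aestronglyMeasurable (ae_of_all _ fun ω => ?_)
    simp only [Pi.add_apply]
    rw [Real.norm_eq_abs]
    exact abs_mul_le_half _ _
  -- the dropout variables
  have hDae : ∀ i, ∀ᵐ ω ∂μ, D ω i i = 0 ∨ D ω i i = 1 := by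
    intro i
    have hs : MeasurableSet ({0, 1}ᶜ : Set ℝ) :=
      ((measurableSet_singleton 0).union (measurableSet_singleton 1)).compl.congr
        (by ext x; simp; tauto)
    rw [ae_iff]
    have : {ω | ¬(D ω i i = 0 ∨ D ω i i = 1)} = (fun ω => D ω i i) ⁻¹' ({0, 1}ᶜ : Set ℝ) := by
      ext ω; simp
    rw [this, ← Measure.map_apply (hDm i) hs, hD.2.2.2 i]
    exact bern_compl
  have hDb : ∀ i, ∀ᵐ ω ∂μ, |D ω i i| ≤ 1 := by
    intro i
    filter_upwards [hDae i] with ω h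
    rcases h with h | h <;> rw [h] <;> norm_num
  have hDint : ∀ i, Integrable (fun ω => D ω i i) μ := by
    intro i
    refine (integrable_const (1 : ℝ)).mono' (hDm i).aestronglyMeasurable ?_
    filter_upwards [hDb i] with ω h using by rwa [Real.norm_eq_abs]
  have hDDint : ∀ i j, Integrable (fun ω => D ω i i * D ω j j) μ := by
    intro i j
    refine (integrable_const (1 : ℝ)).mono' ((hDm i).mul (hDm j)).aestronglyMeasurable ?_
    filter_upwards [hDb i, hDb j] with ω h1 h2
    rw [Real.norm_eq_abs, abs_mul]
    calc |D ω i i| * |D ω j j| ≤ 1 * 1 := by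
          exact mul_le_mul h1 h2 (abs_nonneg _) zero_le_one
      _ = 1 := by ring
  have hyxDint : ∀ i, Integrable (fun ω => y ω * x1 ω i * D ω i i) μ := by
    intro i
    refine (hyx i).abs.mono' ((hym.mul (hxi i)).mul (hDm i)).aestronglyMeasurable ?_
    filter_upwards [hDb i] with ω h
    rw [Real.norm_eq_abs, abs_mul]
    calc |y ω * x1 ω i| * |D ω i i| ≤ |y ω * x1 ω i| * 1 :=
          mul_le_mul_of_nonneg_left h (abs_nonneg _)
      _ = |y ω * x1 ω i| := mul_one _
  have hxxDint : ∀ i j, Integrable (fun ω => x1 ω i * x1 ω j * (D ω i i * D ω j j)) μ := by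
    intro i j
    refine (hxx i j).abs.mono'
      (((hxi i).mul (hxi j)).mul ((hDm i).mul (hDm j))).aestronglyMeasurable ?_
    filter_upwards [hDb i, hDb j] with ω h1 h2
    rw [Real.norm_eq_abs, abs_mul (x1 ω i * x1 ω j) (D ω i i * D ω j j),
      abs_mul (D ω i i) (D ω j j)]
    calc |x1 ω i * x1 ω j| * (|D ω i i| * |D ω j j|) ≤ |x1 ω i * x1 ω j| * (1 * 1) := by
          refine mul_le_mul_of_nonneg_left ?_ (abs_nonneg _)
          exact mul_le_mul h1 h2 (abs_nonneg _) zero_le_one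
      _ = |x1 ω i * x1 ω j| := by ring
  -- moments of the dropout variables
  have hED : ∀ i, ∫ ω, D ω i i ∂μ = p := by
    intro i
    have h1 : ∫ ω, D ω i i ∂μ = ∫ t, t ∂(Measure.map (fun ω => D ω i i) μ) :=
      (integral_map (hDm i).aemeasurable measurable_id.aestronglyMeasurable).symm
    rw [h1, hD.2.2.2 i, bern_integral hp0.le hp1.le (fun t => t) measurable_id']
    simp
  have hED2 : ∀ i, ∫ ω, D ω i i * D ω i i ∂μ = p := by
    intro i
    have h1 : ∫ ω, D ω i i * D ω i i ∂μ = ∫ t, t * t ∂(Measure.map (fun ω => D ω i i) μ) :=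
      (integral_map (hDm i).aemeasurable
        (measurable_id'.mul measurable_id').aestronglyMeasurable).symm
    rw [h1, hD.2.2.2 i,
      bern_integral hp0.le hp1.le (fun t => t * t) (measurable_id'.mul measurable_id')]
    ring
  have hEDD : ∀ i j, i ≠ j → ∫ ω, D ω i i * D ω j j ∂μ = p ^ 2 := by
    intro i j hij
    have hind := (hD.2.2.1.indepFun hij)
    rw [show (fun ω => D ω i i * D ω j j)
        = (fun ω => D ω i i) * fun ω => D ω j j from rfl,
      hind.integral_mul_eq_mul_integral (hDint i).1 (hDint j).1, hED i, hED j]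
    ring
  -- independence between dropout vector and the data
  have hyxD : ∀ i, ∫ ω, y ω * x1 ω i * D ω i i ∂μ = g i * p := by
    intro i
    have hφ : Measurable fun q : (Fin d → ℝ) × ℝ => (q.1 ⬝ᵥ βstar + q.2) * q.1 i := by
      apply Measurable.mul
      · exact (Finset.measurable_sum _ fun k _ =>
          ((measurable_pi_apply k).comp measurable_fst).mul_const _).add measurable_snd
      · exact (measurable_pi_apply i).comp measurable_fst
    have hind : IndepFun (fun ω => y ω * x1 ω i) (fun ω => D ω i i) μ :=
      (hDdata.comp (measurable_pi_apply i) hφ).symm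
    rw [show (fun ω => y ω * x1 ω i * D ω i i)
        = (fun ω => y ω * x1 ω i) * fun ω => D ω i i from rfl,
      hind.integral_mul_eq_mul_integral (hyx i).1 (hDint i).1, hED i]
    rfl
  -- key diagonal-quadratic moments
  have hS : ∀ i j, S i j = (if i = j then (1:ℝ) else p) * E i j := by
    intro i j
    have hptw : ∀ ω, p * (x1 ω i * x1 ω j) +
        (1 - p) * (if i = j then x1 ω i * x1 ω j else 0)
        = (if i = j then (1:ℝ) else p) * (x1 ω i * x1 ω j) := by
      intro ω
      rcases eq_or_ne i j with h | h
      · rw [if_pos h, if_pos h]; ring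
      · rw [if_neg h, if_neg h]; ring
    show (∫ ω, (p * (x1 ω i * x1 ω j) +
        (1 - p) * if i = j then x1 ω i * x1 ω j else 0) ∂μ)
      = (if i = j then (1:ℝ) else p) * ∫ ω, x1 ω i * x1 ω j ∂μ
    simp only [hptw]
    exact integral_const_mul _ _
  have hxxD : ∀ i j, ∫ ω, x1 ω i * x1 ω j * (D ω i i * D ω j j) ∂μ = p * S i j := by
    intro i j
    have hφ : Measurable fun q : (Fin d → ℝ) × ℝ => q.1 i * q.1 j :=
      ((measurable_pi_apply i).comp measurable_fst).mul
        ((measurable_pi_apply j).comp measurable_fst)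
    have hψ : Measurable fun v : Fin d → ℝ => v i * v j :=
      (measurable_pi_apply i).mul (measurable_pi_apply j)
    have hind : IndepFun (fun ω => x1 ω i * x1 ω j) (fun ω => D ω i i * D ω j j) μ :=
      (hDdata.comp hψ hφ).symm
    rw [show (fun ω => x1 ω i * x1 ω j * (D ω i i * D ω j j))
        = (fun ω => x1 ω i * x1 ω j) * fun ω => D ω i i * D ω j j from rfl,
      hind.integral_mul_eq_mul_integral (hxx i j).1 (hDDint i j).1, hS i j]
    rcases eq_or_ne i j with h | h
    · subst h; rw [hED2 i, if_pos rfl]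
      show _ * _ = p * (1 * ∫ ω, x1 ω i * x1 ω i ∂μ); ring
    · rw [hEDD i j h, if_neg h]
      show _ * _ = p * (p * ∫ ω, x1 ω i * x1 ω j ∂μ); ring
  -- the quadratic expansion of the loss
  have hF : ∀ b : Fin d → ℝ, dropoutLoss μ x1 ε1 βstar D b
      = (∫ ω, y ω ^ 2 ∂μ) / 2 - p * (g ⬝ᵥ b)
        + (p / 2) * (b ⬝ᵥ S.mulVec b) := by
    intro b
    have hdot : ∀ ω, x1 ω ⬝ᵥ (D ω).mulVec b = ∑ i, x1 ω i * D ω i i * b i := by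
      intro ω
      rw [dotProduct]
      refine Finset.sum_congr rfl fun i _ => ?_
      have hmv : (D ω).mulVec b i = D ω i i * b i := by
        rw [Matrix.mulVec, dotProduct]
        exact Finset.sum_eq_single i (fun j _ hj => by rw [hD.2.1 ω i j (Ne.symm hj), zero_mul])
          (fun h => absurd (Finset.mem_univ i) h)
      rw [hmv]; ring
    have hptws : ∀ ω, (y ω - ∑ i, x1 ω i * D ω i i * b i) ^ 2 / 2
        = y ω ^ 2 / 2 - (∑ i, b i * (y ω * x1 ω i * D ω i i))
          + (1/2) * ∑ i, ∑ j, (b i * b j) * (x1 ω i * x1 ω j * (D ω i i * D ω j j)) := by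
      intro ω
      have h1 : y ω * (∑ i, x1 ω i * D ω i i * b i)
          = ∑ i, b i * (y ω * x1 ω i * D ω i i) := by
        rw [Finset.mul_sum]; exact Finset.sum_congr rfl fun i _ => by ring
      have h2 : (∑ i, x1 ω i * D ω i i * b i) ^ 2
          = ∑ i, ∑ j, (b i * b j) * (x1 ω i * x1 ω j * (D ω i i * D ω j j)) := by
        rw [sq, Finset.sum_mul_sum]
        exact Finset.sum_congr rfl fun i _ => Finset.sum_congr rfl fun j _ => by ring
      rw [show (y ω - ∑ i, x1 ω i * D ω i i * b i) ^ 2 / 2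
          = y ω ^ 2 / 2 - y ω * (∑ i, x1 ω i * D ω i i * b i)
            + (∑ i, x1 ω i * D ω i i * b i) ^ 2 / 2 from by ring, h1, h2]
      ring
    have hstep : dropoutLoss μ x1 ε1 βstar D b
        = ∫ ω, (y ω ^ 2 / 2 - (∑ i, b i * (y ω * x1 ω i * D ω i i))
          + (1/2) * ∑ i, ∑ j, (b i * b j) * (x1 ω i * x1 ω j * (D ω i i * D ω j j))) ∂μ := by
      show (∫ ω, (x1 ω ⬝ᵥ βstar + ε1 ω - x1 ω ⬝ᵥ (D ω).mulVec b) ^ 2 / 2 ∂μ) = _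
      congr 1; funext ω
      rw [hdot ω]
      exact hptws ω
    have int1 : Integrable (fun ω => y ω ^ 2 / 2) μ := hymom.div_const 2
    have int2 : Integrable (fun ω => ∑ i, b i * (y ω * x1 ω i * D ω i i)) μ :=
      integrable_finset_sum _ fun i _ => (hyxDint i).const_mul _
    have int3 : Integrable
        (fun ω => (1/2) * ∑ i, ∑ j, (b i * b j) * (x1 ω i * x1 ω j * (D ω i i * D ω j j))) μ :=
      (integrable_finset_sum _ fun i _ =>
        integrable_finset_sum _ fun j _ => (hxxDint i j).const_mul _).const_mul _
    have int12 : Integrable (fun ω => y ω ^ 2 / 2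
        - ∑ i, b i * (y ω * x1 ω i * D ω i i)) μ := int1.sub int2
    rw [hstep, integral_add int12 int3, integral_sub int1 int2]
    have hA : ∫ ω, y ω ^ 2 / 2 ∂μ = (∫ ω, y ω ^ 2 ∂μ) / 2 := integral_div 2 _
    have hB : ∫ ω, (∑ i, b i * (y ω * x1 ω i * D ω i i)) ∂μ = p * (g ⬝ᵥ b) := by
      rw [integral_finset_sum _ fun i _ => (hyxDint i).const_mul _]
      calc ∑ i, ∫ ω, b i * (y ω * x1 ω i * D ω i i) ∂μ
          = ∑ i, b i * (g i * p) :=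
            Finset.sum_congr rfl fun i _ => by rw [integral_const_mul, hyxD i]
        _ = p * (g ⬝ᵥ b) := by
            rw [dotProduct, Finset.mul_sum]
            exact Finset.sum_congr rfl fun i _ => by ring
    have hC : ∫ ω, (1/2) * (∑ i, ∑ j, (b i * b j)
        * (x1 ω i * x1 ω j * (D ω i i * D ω j j))) ∂μ = (p/2) * (b ⬝ᵥ S.mulVec b) := by
      rw [integral_const_mul,
        integral_finset_sum _ fun i _ =>
          integrable_finset_sum _ fun j _ => (hxxDint i j).const_mul _]
      have hinner : ∀ i, ∫ ω, (∑ j, (b i * b j) * (x1 ω i * x1 ω j * (D ω i i * D ω j j))) ∂μ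
          = ∑ j, (b i * b j) * (p * S i j) := by
        intro i
        rw [integral_finset_sum _ fun j _ => (hxxDint i j).const_mul _]
        exact Finset.sum_congr rfl fun j _ => by rw [integral_const_mul, hxxD i j]
      calc (1/2 : ℝ) * ∑ i, ∫ ω, (∑ j, (b i * b j)
            * (x1 ω i * x1 ω j * (D ω i i * D ω j j))) ∂μ
          = (1/2 : ℝ) * ∑ i, ∑ j, (b i * b j) * (p * S i j) := by
            rw [Finset.sum_congr rfl fun i _ => hinner i]
        _ = (p/2) * (b ⬝ᵥ S.mulVec b) := by
            simp only [dotProduct, Matrix.mulVec, Finset.mul_sum]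
            refine Finset.sum_congr rfl fun i _ => ?_
            refine Finset.sum_congr rfl fun j _ => ?_
            ring
    rw [hA, hB, hC]
  -- positive definiteness of S
  have hEquad : ∀ v : Fin d → ℝ, v ⬝ᵥ E.mulVec v = ∫ ω, (∑ i, v i * x1 ω i) ^ 2 ∂μ := by
    intro v
    have h1 : ∀ ω, (∑ i, v i * x1 ω i) ^ 2
        = ∑ i, ∑ j, v i * (x1 ω i * x1 ω j * v j) := by
      intro ω
      rw [sq, Finset.sum_mul_sum]
      exact Finset.sum_congr rfl fun i _ => Finset.sum_congr rfl fun j _ => by ring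
    calc v ⬝ᵥ E.mulVec v = ∑ i, ∑ j, v i * (E i j * v j) := by
          simp [dotProduct, Matrix.mulVec, Finset.mul_sum]
      _ = ∑ i, ∑ j, ∫ ω, v i * (x1 ω i * x1 ω j * v j) ∂μ := by
          refine Finset.sum_congr rfl fun i _ => Finset.sum_congr rfl fun j _ => ?_
          rw [show E i j = ∫ ω, x1 ω i * x1 ω j ∂μ from rfl, ← integral_mul_const,
            ← integral_const_mul]
      _ = ∫ ω, (∑ i, ∑ j, v i * (x1 ω i * x1 ω j * v j)) ∂μ := by
          rw [integral_finset_sum _ fun i _ => integrable_finset_sum _ fun j _ =>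
            ((hxx i j).mul_const _).const_mul _]
          exact Finset.sum_congr rfl fun i _ =>
            (integral_finset_sum _ fun j _ => ((hxx i j).mul_const _).const_mul _).symm
      _ = ∫ ω, (∑ i, v i * x1 ω i) ^ 2 ∂μ := by
          congr 1; funext ω; rw [h1 ω]
  have hE_psd : ∀ v : Fin d → ℝ, 0 ≤ v ⬝ᵥ E.mulVec v := by
    intro v
    rw [hEquad v]
    exact integral_nonneg fun ω => sq_nonneg _
  have hquad : ∀ v : Fin d → ℝ, v ⬝ᵥ S.mulVec v
      = p * (v ⬝ᵥ E.mulVec v) + (1 - p) * ∑ i, v i ^ 2 * E i i := by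
    intro v
    have h2 : ∀ i, ∑ j, (p * (v i * (E i j * v j))
        + if j = i then (1 - p) * (v i ^ 2 * E i i) else 0)
        = p * (v i * ∑ j, E i j * v j) + (1 - p) * (v i ^ 2 * E i i) := by
      intro i
      rw [Finset.sum_add_distrib, Finset.sum_ite_eq' Finset.univ i
        (fun _ => (1 - p) * (v i ^ 2 * E i i))]
      simp [Finset.mul_sum]
    calc v ⬝ᵥ S.mulVec v = ∑ i, ∑ j, v i * (S i j * v j) := by
          simp [dotProduct, Matrix.mulVec, Finset.mul_sum]
      _ = ∑ i, ∑ j, (p * (v i * (E i j * v j))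
            + if j = i then (1 - p) * (v i ^ 2 * E i i) else 0) := by
          refine Finset.sum_congr rfl fun i _ => Finset.sum_congr rfl fun j _ => ?_
          rw [hS i j]
          rcases eq_or_ne i j with h | h
          · subst h; rw [if_pos rfl, if_pos rfl]; ring
          · rw [if_neg h, if_neg (Ne.symm h)]; ring
      _ = ∑ i, (p * (v i * ∑ j, E i j * v j) + (1 - p) * (v i ^ 2 * E i i)) :=
          Finset.sum_congr rfl fun i _ => h2 i
      _ = p * (v ⬝ᵥ E.mulVec v) + (1 - p) * ∑ i, v i ^ 2 * E i i := by
          rw [Finset.sum_add_distrib]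
          congr 1
          · simp [dotProduct, Matrix.mulVec, Finset.mul_sum]
          · rw [Finset.mul_sum]
  have hSpd : ∀ v : Fin d → ℝ, v ≠ 0 → 0 < v ⬝ᵥ S.mulVec v := by
    intro v hv
    rw [hquad v]
    have h1 : 0 < ∑ i, v i ^ 2 * E i i := by
      obtain ⟨i, hi⟩ := Function.ne_iff.mp hv
      refine Finset.sum_pos' (fun j _ => mul_nonneg (sq_nonneg _) ?_) ⟨i, Finset.mem_univ i, ?_⟩
      · have := (hred j).le
        have hEjj : E j j = ∫ ω, x1 ω j ^ 2 ∂μ := by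
          show (∫ ω, x1 ω j * x1 ω j ∂μ) = _
          congr 1; funext ω; ring
        rw [hEjj]; exact this
      · have hEii : E i i = ∫ ω, x1 ω i ^ 2 ∂μ := by
          show (∫ ω, x1 ω i * x1 ω i ∂μ) = _
          congr 1; funext ω; ring
        have hvi : v i ≠ 0 := by simpa using hi
        rw [hEii]
        exact mul_pos (lt_of_le_of_ne (sq_nonneg _) (Ne.symm (pow_ne_zero 2 hvi))) (hred i)
    nlinarith [hE_psd v, mul_nonneg hp0.le (hE_psd v)]
  have hStr : ∀ i j, S j i = S i j := by
    intro i j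
    rw [hS i j, hS j i, show (if j = i then (1:ℝ) else p) = if i = j then (1:ℝ) else p from by
      rcases eq_or_ne i j with h | h
      · simp [h]
      · simp [h, Ne.symm h]]
    congr 1
    show (∫ ω, x1 ω j * x1 ω i ∂μ) = ∫ ω, x1 ω i * x1 ω j ∂μ
    congr 1; funext ω; ring
  have hSt : S.transpose = S := by
    ext i j; rw [Matrix.transpose_apply]; exact hStr i j
  have hSsym : S.IsHermitian := by
    ext i j
    rw [Matrix.conjTranspose_apply, star_trivial]
    exact hStr i j
  have hSposdef : S.PosDef := .of_dotProduct_mulVec_pos hSsym (fun v hv => by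
    rw [show star v = v from funext fun i => star_trivial _]
    exact hSpd v hv)
  have hdet : IsUnit S.det := hSposdef.det_pos.ne'.isUnit
  set βb : Fin d → ℝ := S⁻¹.mulVec g with hβb_def
  have hSβb : S.mulVec βb = g := by
    rw [hβb_def, Matrix.mulVec_mulVec, Matrix.mul_nonsing_inv _ hdet, Matrix.one_mulVec]
  -- symmetric bilinear identity
  have hsymdot : ∀ u v : Fin d → ℝ, u ⬝ᵥ S.mulVec v = v ⬝ᵥ S.mulVec u := by
    intro u v
    rw [Matrix.dotProduct_mulVec, ← Matrix.mulVec_transpose, hSt, dotProduct_comm]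
  have hdiff : ∀ b : Fin d → ℝ, dropoutLoss μ x1 ε1 βstar D b
      = dropoutLoss μ x1 ε1 βstar D βb + (p / 2) * ((b - βb) ⬝ᵥ S.mulVec (b - βb)) := by
    intro b
    rw [hF b, hF βb]
    have e1 : (b - βb) ⬝ᵥ S.mulVec (b - βb)
        = (b ⬝ᵥ S.mulVec b - βb ⬝ᵥ S.mulVec b) - (b ⬝ᵥ S.mulVec βb - βb ⬝ᵥ S.mulVec βb) := by
      rw [Matrix.mulVec_sub, dotProduct_sub, sub_dotProduct, sub_dotProduct]
    have e2 : βb ⬝ᵥ S.mulVec b = b ⬝ᵥ S.mulVec βb := hsymdot βb b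
    have e3 : b ⬝ᵥ S.mulVec βb = g ⬝ᵥ b := by rw [hSβb]; exact dotProduct_comm _ _
    have e4 : βb ⬝ᵥ S.mulVec βb = g ⬝ᵥ βb := by rw [hSβb]; exact dotProduct_comm _ _
    rw [e1, e2, e3, e4]
    ring
  refine ⟨?_, ?_, ?_⟩
  · -- part 1
    have hmat : p ^ 2 • E + (p * (1 - p)) • Matrix.diagonal (fun i => E i i) = p • S := by
      ext i j
      simp only [Matrix.add_apply, Matrix.smul_apply, Matrix.diagonal_apply, smul_eq_mul]
      rw [hS i j]
      rcases eq_or_ne i j with h | h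
      · subst h; rw [if_pos rfl, if_pos rfl]; ring
      · rw [if_neg h, if_neg h]; ring
    have hinv : (p • S)⁻¹ = p⁻¹ • S⁻¹ := by
      refine Matrix.inv_eq_left_inv ?_
      rw [Matrix.smul_mul, Matrix.mul_smul, smul_smul, Matrix.nonsing_inv_mul _ hdet,
        inv_mul_cancel₀ (ne_of_gt hp0), one_smul]
    rw [hmat, hinv, Matrix.smul_mulVec, smul_smul,
      mul_inv_cancel₀ (ne_of_gt hp0), one_smul]
  · -- part 2
    intro b
    rw [hdiff b]
    rcases eq_or_ne (b - βb) 0 with h | h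
    · simp [h]
    · have := (hSpd _ h).le
      nlinarith
  · -- part 3
    intro b hmin
    have h1 := hmin βb
    rw [hdiff b] at h1
    by_contra hne
    have hq : b - βb ≠ 0 := sub_ne_zero.mpr hne
    have := hSpd _ hq
    have hL0 : 0 ≤ dropoutLoss μ x1 ε1 βstar D βb :=
      integral_nonneg fun ω => by positivity
    nlinarith

end
end
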